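/- arXiv:math/9907014 — 6 statements merged into one kernel-verified Lean document; each statement's English description precedes it below -/
import Mathlib

section
/- For coprime integers a, b with a ≠ b, the number of points of period n under the shift map T on the solenoid X = {x ∈ T^ℤ : b·x_{k+1} = a·x_k for all k} equals |b^n - a^n|. -/
/-- The solenoid determined by `F(x) = b·x - a`: the closed subgroup of `(ℝ/ℤ)^ℤ`
consisting of sequences `x` with `b·x_{k+1} = a·x_k` for all `k`. -/
def Solenoid (a b : ℤ) : Type :=
  {x : ℤ → AddCircle (1 : ℝ) // ∀ k : ℤ, b • x (k + 1) = a • x k}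

/-- The left shift on the solenoid, `T(x)_k = x_{k+1}`. -/
def solShift (a b : ℤ) : Solenoid a b → Solenoid a b :=
  fun x => ⟨fun k => x.1 (k + 1), fun k => x.2 (k + 1)⟩

lemma solShift_iterate (a b : ℤ) (m : ℕ) (x : Solenoid a b) (k : ℤ) :
    ((solShift a b)^[m] x).1 k = x.1 (k + m) := by
  induction m generalizing x k with
  | zero => simp
  | succ m ih =>
    rw [Function.iterate_succ_apply, ih (solShift a b x) k]
    show x.1 (k + m + 1) = x.1 (k + (m + 1 : ℕ))
    congr 1
    push_cast
    ring

lemma pow_smul_coord (a b : ℤ) (x : Solenoid a b) (m : ℕ) (k : ℤ) :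
    b ^ m • x.1 (k + m) = a ^ m • x.1 k := by
  induction m with
  | zero => simp
  | succ m ih =>
    have h1 : b ^ (m + 1) • x.1 (k + (m + 1 : ℕ)) = b ^ m • (b • x.1 ((k + m) + 1)) := by
      rw [← mul_smul, ← pow_succ]
      congr 2
      push_cast
      ring
    rw [h1, x.2 (k + m), smul_comm, ih, ← mul_smul, ← pow_succ']

lemma coord_torsion {a b : ℤ} {n : ℕ} {x : Solenoid a b}
    (hx : (solShift a b)^[n] x = x) (k : ℤ) :
    (b ^ n - a ^ n) • x.1 k = 0 := by
  have h1 := pow_smul_coord a b x n k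
  have h2 : x.1 (k + n) = x.1 k := by
    conv_rhs => rw [← hx, solShift_iterate]
  rw [h2] at h1
  rw [sub_smul, h1, sub_self]

theorem solenoid_periodic_points (a b : ℤ) (hab : IsCoprime a b) (hne : a ≠ b)
    (hb : b ≠ 0) (n : ℕ) (hn : 1 ≤ n) :
    Nat.card {x : Solenoid a b // (solShift a b)^[n] x = x} = (b ^ n - a ^ n).natAbs := by
  by_cases hd : b ^ n - a ^ n = 0
  · -- degenerate case: a = -b = ±1, n even; infinitely many periodic points
    rw [hd]
    have hpow : b ^ n = a ^ n := by linarith [sub_eq_zero.mp hd]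
    have hco : IsCoprime (a ^ n) (b ^ n) := hab.pow
    rw [hpow] at hco
    have hau : IsUnit (a ^ n) := hco.isUnit_of_dvd' dvd_rfl dvd_rfl
    have hbu : IsUnit (b ^ n) := by rw [hpow]; exact hau
    have hone : ∀ c : ℤ, IsUnit (c ^ n) → c = 1 ∨ c = -1 := by
      intro c hc
      rw [← Int.isUnit_iff, Int.isUnit_iff_natAbs_eq]
      rw [Int.isUnit_iff_natAbs_eq, Int.natAbs_pow] at hc
      exact Nat.eq_one_of_dvd_one (hc ▸ dvd_pow_self _ (by omega : n ≠ 0))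
    have hnb : a = -b := by
      rcases hone a hau with rfl | rfl <;> rcases hone b hbu with rfl | rfl <;> omega
    have hb0 : b ^ n ≠ 0 := pow_ne_zero n hb
    have hneg1 : ((-1 : ℤ)) ^ n = 1 := by
      have h1 : (-1:ℤ)^n * b^n = 1 * b^n := by rw [one_mul, ← neg_pow, ← hnb, ← hpow]
      exact mul_right_cancel₀ hb0 h1
    have hev : Even n := by
      rcases Nat.even_or_odd n with h | h
      · exact h
      · rw [h.neg_one_pow] at hneg1; omega
    have hev' : Even (n : ℤ) := (Int.even_coe_nat n).mpr hev
    have hrel : ∀ t : AddCircle (1:ℝ), ∀ k : ℤ,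
        b • (if Even (k+1) then t else -t) = a • (if Even k then t else -t) := by
      intro t k
      rw [hnb]
      by_cases hk : Even k
      · rw [if_pos hk, if_neg (by simp [Int.even_add_one, hk])]
        simp [smul_neg, neg_smul]
      · rw [if_neg hk, if_pos (by rw [Int.even_add_one]; exact hk)]
        simp [smul_neg, neg_smul]
    have hper : ∀ t : AddCircle (1:ℝ),
        (solShift a b)^[n] (⟨fun k => if Even k then t else -t, hrel t⟩ : Solenoid a b)
          = ⟨fun k => if Even k then t else -t, hrel t⟩ := by
      intro t
      apply Subtype.ext
      funext k
      refine (solShift_iterate a b n _ k).trans ?_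
      show (if Even (k + n) then t else -t) = if Even k then t else -t
      congr 1
      simp [Int.even_add, hev']
    have : Infinite {x : Solenoid a b // (solShift a b)^[n] x = x} := by
      have hinf : Infinite (AddCircle (1:ℝ)) := by
        have e := AddCircle.equivIco (1:ℝ) (hp := ⟨one_pos⟩) 0
        have h2 : Infinite (Set.Ico (0:ℝ) (0+1)) := Set.Ico.infinite (by norm_num)
        exact Infinite.of_injective _ (Equiv.injective e.symm)
      refine Infinite.of_injective
        (fun t : AddCircle (1:ℝ) =>
          (⟨⟨fun k => if Even k then t else -t, hrel t⟩, hper t⟩ :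
            {x : Solenoid a b // (solShift a b)^[n] x = x})) ?_
      intro t t' h
      have h0 := congrArg (fun z => z.1.1 0) h
      simpa using h0
    simp [Nat.card_eq_zero_of_infinite]
  · -- main case: the fixed points are parametrized by `ZMod |bⁿ - aⁿ|`
    set d : ℤ := b ^ n - a ^ n with hd_def
    set D : ℕ := d.natAbs with hD_def
    haveI : NeZero D := ⟨by simpa [hD_def, Int.natAbs_eq_zero] using hd⟩
    have hdD : ((d : ℤ) : ZMod D) = 0 := by
      rw [ZMod.intCast_zmod_eq_zero_iff_dvd]
      exact Int.natAbs_dvd.mpr dvd_rfl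
    have habn : ((a : ZMod D)) ^ n = (b : ZMod D) ^ n := by
      have h1 : ((b ^ n - a ^ n : ℤ) : ZMod D) = 0 := hdD
      push_cast at h1
      linear_combination -h1
    have hca : IsCoprime d a := by
      apply IsCoprime.of_add_mul_left_left (z := a ^ (n - 1))
      have : d + a * a ^ (n - 1) = b ^ n := by
        rw [hd_def, ← pow_succ']
        have : n - 1 + 1 = n := by omega
        rw [this]; ring
      rw [this]
      exact hab.symm.pow_left
    have hcb : IsCoprime d b := by
      apply IsCoprime.of_add_mul_left_left (z := -(b ^ (n - 1)))
      have : d + b * -(b ^ (n - 1)) = -(a ^ n) := by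
        have h2 : b * b ^ (n - 1) = b ^ n := by
          rw [← pow_succ']
          congr 1
          omega
        rw [hd_def]
        linear_combination -h2
      rw [this]
      exact hab.pow_left.neg_left
    have hA : IsUnit ((a : ZMod D)) := by
      obtain ⟨p, q, hpq⟩ := hca
      have h1 := congrArg (fun z : ℤ => (z : ZMod D)) hpq
      push_cast at h1
      rw [hdD] at h1
      exact IsUnit.of_mul_eq_one (q : ZMod D) (by linear_combination h1)
    have hB : IsUnit ((b : ZMod D)) := by
      obtain ⟨p, q, hpq⟩ := hcb
      have h1 := congrArg (fun z : ℤ => (z : ZMod D)) hpq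
      push_cast at h1
      rw [hdD] at h1
      exact IsUnit.of_mul_eq_one (q : ZMod D) (by linear_combination h1)
    set α : (ZMod D)ˣ := hA.unit with hα_def
    set β : (ZMod D)ˣ := hB.unit with hβ_def
    have hα : (α : ZMod D) = (a : ZMod D) := hA.unit_spec
    have hβ : (β : ZMod D) = (b : ZMod D) := hB.unit_spec
    set u : (ZMod D)ˣ := α * β⁻¹ with hu_def
    have hu : (b : ZMod D) * (u : ZMod D) = (a : ZMod D) := by
      rw [hu_def, Units.val_mul, ← hβ, ← hα, mul_comm ((β : ZMod D)) _, mul_assoc,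
        Units.inv_mul, mul_one]
    have hun : u ^ n = 1 := by
      have hαβ : α ^ n = β ^ n := Units.ext (by
        rw [Units.val_pow_eq_pow_val, Units.val_pow_eq_pow_val, hα, hβ, habn])
      rw [hu_def, mul_pow, inv_pow, hαβ, mul_inv_cancel]
    have hsm : ∀ (z : ℤ) (w : ZMod D),
        z • ((ZMod.toAddCircle w) : AddCircle (1:ℝ)) = ZMod.toAddCircle ((z : ZMod D) * w) := by
      intro z w
      rw [← map_zsmul, zsmul_eq_mul]
    have htors : ∀ t : AddCircle (1:ℝ), (D : ℤ) • t = 0 →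
        ∃ j : ZMod D, ZMod.toAddCircle j = t := by
      intro t ht
      induction t using QuotientAddGroup.induction_on with
      | H x =>
        rw [← AddCircle.coe_zsmul, AddCircle.coe_eq_zero_iff] at ht
        obtain ⟨m, hm⟩ := ht
        refine ⟨(m : ZMod D), ?_⟩
        rw [ZMod.toAddCircle_intCast]
        congr 1
        have hD0 : (D : ℝ) ≠ 0 := Nat.cast_ne_zero.mpr (NeZero.ne D)
        rw [zsmul_eq_mul, zsmul_eq_mul] at hm
        push_cast at hm
        rw [div_eq_iff hD0]
        linarith
    have htorsD : ∀ t : AddCircle (1:ℝ), d • t = 0 → (D : ℤ) • t = 0 := by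
      intro t ht
      rcases Int.natAbs_eq d with h | h
      · rw [← hD_def] at h
        rw [← h]
        exact ht
      · rw [← hD_def] at h
        have h2 : (D : ℤ) = -d := by omega
        rw [h2, neg_smul, ht, neg_zero]
    have grel : ∀ j : ZMod D, ∀ k : ℤ,
        b • (ZMod.toAddCircle (((u ^ (k+1) : (ZMod D)ˣ) : ZMod D) * j) : AddCircle (1:ℝ))
          = a • ZMod.toAddCircle (((u ^ k : (ZMod D)ˣ) : ZMod D) * j) := by
      intro j k
      rw [hsm, hsm]
      congr 1
      rw [zpow_add_one, Units.val_mul]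
      linear_combination (((u ^ k : (ZMod D)ˣ) : ZMod D) * j) * hu
    have gper : ∀ j : ZMod D,
        (solShift a b)^[n] (⟨fun k => ZMod.toAddCircle (((u ^ k : (ZMod D)ˣ) : ZMod D) * j),
          grel j⟩ : Solenoid a b)
        = ⟨fun k => ZMod.toAddCircle (((u ^ k : (ZMod D)ˣ) : ZMod D) * j), grel j⟩ := by
      intro j
      apply Subtype.ext
      funext k
      refine (solShift_iterate a b n _ k).trans ?_
      show ZMod.toAddCircle (((u ^ (k + (n:ℤ)) : (ZMod D)ˣ) : ZMod D) * j) = _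
      rw [zpow_add, zpow_natCast, hun, mul_one]
    set g : ZMod D → {x : Solenoid a b // (solShift a b)^[n] x = x} := fun j =>
      ⟨⟨fun k => ZMod.toAddCircle (((u ^ k : (ZMod D)ˣ) : ZMod D) * j), grel j⟩, gper j⟩
      with hg_def
    have ginj : Function.Injective g := by
      intro j j' h
      have h0 := congrArg (fun z => z.1.1 0) h
      simp only [hg_def, zpow_zero, Units.val_one, one_mul] at h0
      exact ZMod.toAddCircle_injective D h0
    have gsurj : Function.Surjective g := by
      rintro ⟨x, hx⟩
      have htorsk : ∀ k : ℤ, (D : ℤ) • x.1 k = 0 := fun k => htorsD _ (coord_torsion hx k)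
      obtain ⟨j, hj⟩ := htors (x.1 0) (htorsk 0)
      have key : ∀ k : ℤ, x.1 k = ZMod.toAddCircle (((u ^ k : (ZMod D)ˣ) : ZMod D) * j) := by
        intro k
        induction k using Int.induction_on with
        | zero => rw [zpow_zero, Units.val_one, one_mul]; exact hj.symm
        | succ i ih =>
          obtain ⟨m, hm⟩ := htors (x.1 ((i:ℤ)+1)) (htorsk ((i:ℤ)+1))
          have hrel := x.2 (i:ℤ)
          rw [← hm, ih, hsm, hsm] at hrel
          have hrel' : (b : ZMod D) * m
              = (a : ZMod D) * (((u ^ (i:ℤ) : (ZMod D)ˣ) : ZMod D) * j) :=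
            ZMod.toAddCircle_injective D hrel
          have hmval : m = ((u ^ ((i:ℤ)+1) : (ZMod D)ˣ) : ZMod D) * j := by
            apply hB.mul_left_cancel
            rw [hrel', zpow_add_one, Units.val_mul]
            linear_combination (((u ^ (i:ℤ) : (ZMod D)ˣ) : ZMod D) * j) * hu.symm
          rw [← hm, hmval]
        | pred i ih =>
          obtain ⟨m, hm⟩ := htors (x.1 (-(i:ℤ)-1)) (htorsk (-(i:ℤ)-1))
          have hrel := x.2 (-(i:ℤ)-1)
          have harg : (-(i:ℤ)-1)+1 = -(i:ℤ) := by ring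
          rw [harg, ← hm, ih, hsm, hsm] at hrel
          have hrel' : (b : ZMod D) * (((u ^ (-(i:ℤ)) : (ZMod D)ˣ) : ZMod D) * j)
              = (a : ZMod D) * m :=
            ZMod.toAddCircle_injective D hrel
          have hmval : m = ((u ^ (-(i:ℤ)-1) : (ZMod D)ˣ) : ZMod D) * j := by
            apply hA.mul_left_cancel
            rw [← hrel', zpow_sub_one, Units.val_mul]
            have hb' : (b : ZMod D) = (a : ZMod D) * ((u⁻¹ : (ZMod D)ˣ) : ZMod D) := by
              rw [← hu, mul_assoc, Units.mul_inv, mul_one]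
            linear_combination (((u ^ (-(i:ℤ)) : (ZMod D)ˣ) : ZMod D) * j) * hb'
          rw [← hm, hmval]
      refine ⟨j, ?_⟩
      apply Subtype.ext
      apply Subtype.ext
      funext k
      exact (key k).symm
    rw [Nat.card_congr (Equiv.ofBijective g ⟨ginj, gsurj⟩).symm, Nat.card_zmod]
end

section
/- For q ∈ ℚ_p, the p-adic q-transformation T_q on ℤ_p preserves the Haar measure on ℤ_p whenever |q|_p ≥ 1. -/
open MeasureTheory

/-- `T : ℤ_p → ℤ_p` is the `p`-adic `q`-transformation: `T x` is obtained from `q·x` by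
deleting the fractional (negative-power) part of its `p`-adic expansion, i.e. `q·x - T x`
is a rational of the form `m / p^k` with `0 ≤ m < p^k`. -/
def IsDigitTrunc {p : ℕ} [Fact p.Prime] (q : ℚ_[p]) (T : ℤ_[p] → ℤ_[p]) : Prop :=
  ∀ x : ℤ_[p], ∃ m k : ℕ, m < p ^ k ∧
    ((T x : ℚ_[p]) = q * (x : ℚ_[p]) - (m : ℚ_[p]) / (p : ℚ_[p]) ^ k)

noncomputable instance (p : ℕ) [Fact p.Prime] : MeasurableSpace ℤ_[p] := borel _
instance (p : ℕ) [Fact p.Prime] : BorelSpace ℤ_[p] := ⟨rfl⟩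

/-- The difference of two "fractional parts" that lies in `ℤ_p` is zero. -/
lemma frac_diff_zero (p : ℕ) [Fact p.Prime] (m k m' k' : ℕ) (hm : m < p ^ k)
    (hm' : m' < p ^ k')
    (h : ‖(m : ℚ_[p]) / (p : ℚ_[p]) ^ k - (m' : ℚ_[p]) / (p : ℚ_[p]) ^ k'‖ ≤ 1) :
    (m : ℚ_[p]) / (p : ℚ_[p]) ^ k = (m' : ℚ_[p]) / (p : ℚ_[p]) ^ k' := by
  have hp : (p : ℚ_[p]) ≠ 0 := by
    exact_mod_cast (Nat.cast_ne_zero (R := ℚ_[p])).mpr (Fact.out : p.Prime).ne_zero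
  set d : ℤ := (m : ℤ) * p ^ k' - (m' : ℤ) * p ^ k with hd
  have hD : (m : ℚ_[p]) / (p : ℚ_[p]) ^ k - (m' : ℚ_[p]) / (p : ℚ_[p]) ^ k'
      = (d : ℚ_[p]) / (p : ℚ_[p]) ^ (k + k') := by
    field_simp [hd]
    rw [hd]; push_cast
    ring
  have hpR : (0:ℝ) < (p : ℝ) := by
    exact_mod_cast (Fact.out : p.Prime).pos
  have hnorm : ‖(d : ℚ_[p])‖ ≤ (p : ℝ) ^ (-(k + k') : ℤ) := by
    have hpr : (0:ℝ) < (p : ℝ) ^ (k + k') := pow_pos hpR _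
    have h2 : ‖(d : ℚ_[p]) / (p : ℚ_[p]) ^ (k + k')‖
        = ‖(d : ℚ_[p])‖ * (p : ℝ) ^ (k + k') := by
      rw [norm_div, norm_pow, Padic.norm_p, inv_pow, division_def, inv_inv]
    rw [hD, h2] at h
    rw [zpow_neg, ← Nat.cast_add, zpow_natCast]
    calc ‖(d : ℚ_[p])‖
        = ‖(d : ℚ_[p])‖ * (p:ℝ) ^ (k + k') * ((p:ℝ) ^ (k + k'))⁻¹ := by
          field_simp
      _ ≤ 1 * ((p:ℝ) ^ (k + k'))⁻¹ := by
          apply mul_le_mul_of_nonneg_right h (inv_nonneg.mpr hpr.le)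
      _ = ((p:ℝ) ^ (k + k'))⁻¹ := one_mul _
  have hdvd : ((p : ℤ) ^ (k + k')) ∣ d := by
    exact (Padic.norm_int_le_pow_iff_dvd d (k + k')).mp hnorm
  have hpZ : (0:ℤ) < (p : ℤ) := by exact_mod_cast (Fact.out : p.Prime).pos
  have habs : |d| < (p : ℤ) ^ (k + k') := by
    rw [abs_lt, hd, pow_add]
    have hk : (0:ℤ) < (p:ℤ) ^ k := pow_pos hpZ _
    have hk' : (0:ℤ) < (p:ℤ) ^ k' := pow_pos hpZ _
    have h1 : (m' : ℤ) * p ^ k < (p:ℤ) ^ k' * p ^ k :=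
      mul_lt_mul_of_pos_right (by exact_mod_cast hm') hk
    have h2 : (0:ℤ) ≤ (m : ℤ) * p ^ k' := mul_nonneg (by positivity) hk'.le
    have h3 : (m : ℤ) * p ^ k' < (p:ℤ) ^ k * p ^ k' :=
      mul_lt_mul_of_pos_right (by exact_mod_cast hm) hk'
    have h4 : (0:ℤ) ≤ (m' : ℤ) * p ^ k := mul_nonneg (by positivity) hk.le
    constructor <;> nlinarith [mul_comm ((p:ℤ) ^ k) ((p:ℤ) ^ k')]
  have hd0 : d = 0 := Int.eq_zero_of_abs_lt_dvd hdvd habs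
  rw [hd0] at hD
  push_cast at hD
  rw [zero_div] at hD
  exact sub_eq_zero.mp hD

/-- For `q ∈ ℚ_p` with `|q|_p ≥ 1`, the `p`-adic `q`-transformation preserves the Haar
probability measure on `ℤ_p`. -/
theorem qTransform_measurePreserving (p : ℕ) [Fact p.Prime] (q : ℚ_[p]) (hq : 1 ≤ ‖q‖)
    (T : ℤ_[p] → ℤ_[p]) (hT : IsDigitTrunc q T)
    (μ : Measure ℤ_[p]) [μ.IsAddHaarMeasure] [IsProbabilityMeasure μ] :
    MeasurePreserving T μ μ := by
  have hq0 : q ≠ 0 := by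
    intro h; rw [h, norm_zero] at hq; linarith
  have hmem : ∀ t : ℤ_[p], ‖q⁻¹ * (t : ℚ_[p])‖ ≤ 1 := by
    intro t
    rw [norm_mul, norm_inv]
    calc ‖q‖⁻¹ * ‖(t : ℚ_[p])‖ ≤ 1 * 1 := by
          apply mul_le_mul _ t.2 (norm_nonneg _) zero_le_one
          rw [inv_le_one_iff₀]; right; exact hq
      _ = 1 := one_mul 1
  set S : ℤ_[p] → ℤ_[p] := fun t => ⟨q⁻¹ * (t : ℚ_[p]), hmem t⟩ with hS
  -- key identity : T (x + S t) = T x + t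
  have key : ∀ x t : ℤ_[p], T (x + S t) = T x + t := by
    intro x t
    obtain ⟨m, k, hm, h1⟩ := hT x
    obtain ⟨m', k', hm', h2⟩ := hT (x + S t)
    have hx : ((x + S t : ℤ_[p]) : ℚ_[p]) = (x : ℚ_[p]) + q⁻¹ * (t : ℚ_[p]) := rfl
    have hqx : q * ((x + S t : ℤ_[p]) : ℚ_[p]) = q * (x : ℚ_[p]) + (t : ℚ_[p]) := by
      rw [hx, mul_add, ← mul_assoc, mul_inv_cancel₀ hq0, one_mul]
    have hdiff : ((T x + t - T (x + S t) : ℤ_[p]) : ℚ_[p])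
        = (m' : ℚ_[p]) / (p : ℚ_[p]) ^ k' - (m : ℚ_[p]) / (p : ℚ_[p]) ^ k := by
      push_cast
      rw [h1, h2, hqx]
      ring
    have hle : ‖(m' : ℚ_[p]) / (p : ℚ_[p]) ^ k' - (m : ℚ_[p]) / (p : ℚ_[p]) ^ k‖ ≤ 1 := by
      rw [← hdiff]
      exact (T x + t - T (x + S t)).2
    have := frac_diff_zero p m' k' m k hm' hm hle
    have hz : ((T x + t - T (x + S t) : ℤ_[p]) : ℚ_[p]) = 0 := by
      rw [hdiff, this, sub_self]
    have : T x + t - T (x + S t) = 0 := Subtype.coe_injective hz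
    linear_combination -this
  -- continuity of T
  have hcont : Continuous T := by
    apply continuous_induced_rng.mpr
    rw [continuous_iff_continuousAt]
    intro x
    have hball : {y : ℤ_[p] | ‖y - x‖ ≤ ‖q‖⁻¹} ∈ nhds x := by
      have hpos : (0:ℝ) < ‖q‖⁻¹ := by rw [inv_pos]; linarith
      have hsub : Metric.closedBall x ‖q‖⁻¹ ⊆ {y : ℤ_[p] | ‖y - x‖ ≤ ‖q‖⁻¹} := by
        intro y hy
        rw [Set.mem_setOf_eq, ← dist_eq_norm]
        exact hy
      exact Filter.mem_of_superset (Metric.closedBall_mem_nhds x hpos) hsub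
    have heq : ∀ y ∈ {y : ℤ_[p] | ‖y - x‖ ≤ ‖q‖⁻¹},
        (T y : ℚ_[p]) = (T x : ℚ_[p]) + q * ((y : ℚ_[p]) - (x : ℚ_[p])) := by
      intro y hy
      have htmem : ‖q * ((y : ℚ_[p]) - (x : ℚ_[p]))‖ ≤ 1 := by
        rw [norm_mul]
        have h1 : ‖(y : ℚ_[p]) - (x : ℚ_[p])‖ = ‖y - x‖ := rfl
        rw [h1]
        calc ‖q‖ * ‖y - x‖ ≤ ‖q‖ * ‖q‖⁻¹ := by
              apply mul_le_mul_of_nonneg_left hy (norm_nonneg q)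
          _ = 1 := mul_inv_cancel₀ (by positivity)
      set t : ℤ_[p] := ⟨q * ((y : ℚ_[p]) - (x : ℚ_[p])), htmem⟩ with ht
      have hxy : x + S t = y := by
        apply Subtype.coe_injective
        show (x : ℚ_[p]) + q⁻¹ * ((t : ℤ_[p]) : ℚ_[p]) = (y : ℚ_[p])
        rw [ht]
        show (x : ℚ_[p]) + q⁻¹ * (q * ((y : ℚ_[p]) - (x : ℚ_[p]))) = (y : ℚ_[p])
        rw [← mul_assoc, inv_mul_cancel₀ hq0, one_mul]
        ring
      have := key x t
      rw [hxy] at this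
      rw [this]
      push_cast
      rfl
    apply ContinuousAt.congr
      (f := fun y : ℤ_[p] => (T x : ℚ_[p]) + q * ((y : ℚ_[p]) - (x : ℚ_[p])))
    · apply Continuous.continuousAt
      exact continuous_const.add (continuous_const.mul
        ((continuous_subtype_val).sub continuous_const))
    · apply Filter.eventuallyEq_of_mem hball
      intro y hy
      exact (heq y hy).symm
  have hmeas : Measurable T := hcont.measurable
  -- the pushforward measure
  set ν : Measure ℤ_[p] := μ.map T with hν
  have hprob : IsProbabilityMeasure ν := Measure.isProbabilityMeasure_map hmeas.aemeasurable
  have hinv : ν.IsAddLeftInvariant := by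
    constructor
    intro t
    rw [hν, Measure.map_map (measurable_const_add t) hmeas]
    have hfun : (t + ·) ∘ T = T ∘ (· + S t) := by
      funext x
      show t + T x = T (x + S t)
      rw [key x t, add_comm]
    rw [hfun, ← Measure.map_map hmeas (measurable_add_const (S t)),
      map_add_right_eq_self μ (S t)]
  have hsmul : ν = Measure.addHaarScalarFactor ν μ • μ :=
    Measure.isAddInvariant_eq_smul_of_compactSpace ν μ
  have hone : Measure.addHaarScalarFactor ν μ = 1 := by
    have h := congrArg (fun m : Measure ℤ_[p] => m Set.univ) hsmul
    simp only [Measure.smul_apply, measure_univ, smul_eq_mul, mul_one] at h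
    have h2 : (1 : ENNReal) = (Measure.addHaarScalarFactor ν μ : NNReal) • (1 : ENNReal) := h
    rw [ENNReal.smul_def, smul_eq_mul, mul_one] at h2
    exact_mod_cast h2.symm
  have : ν = μ := by rw [hsmul, hone, one_smul]
  exact ⟨hmeas, this⟩
end

section
/- Let q ∈ ℚ_p with |q|_p ≤ 1. Then the topological entropy of T_q : ℤ_p → ℤ_p is 0; and if |q|_p = p^r > 1, then the topological entropy of T_q is r·log p. In all cases h(T_q) = log⁺|q|_p. -/
open MeasureTheory

open Filter
open scoped ENNReal

variable {p : ℕ} [hp : Fact p.Prime]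

lemma frac_diff_eq_zero {m k m' k' : ℕ} (hm : m < p ^ k) (hm' : m' < p ^ k')
    (h : ‖(m : ℚ_[p]) / (p : ℚ_[p]) ^ k - (m' : ℚ_[p]) / (p : ℚ_[p]) ^ k'‖ ≤ 1) :
    (m : ℚ_[p]) / (p : ℚ_[p]) ^ k = (m' : ℚ_[p]) / (p : ℚ_[p]) ^ k' := by
  have hp0 : (p : ℚ_[p]) ≠ 0 := Nat.cast_ne_zero.2 hp.out.pos.ne'
  set N : ℤ := (m : ℤ) * p ^ k' - (m' : ℤ) * p ^ k with hN
  have hc : (m : ℚ_[p]) / (p : ℚ_[p]) ^ k - (m' : ℚ_[p]) / (p : ℚ_[p]) ^ k'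
      = (N : ℚ_[p]) / (p : ℚ_[p]) ^ (k + k') := by
    field_simp [hN]
    rw [hN]
    push_cast
    ring
  have hnorm : ‖(N : ℚ_[p])‖ ≤ (p : ℝ) ^ (-(k + k' : ℕ) : ℤ) := by
    rw [hc] at h
    calc ‖(N : ℚ_[p])‖ = ‖(N : ℚ_[p]) / (p : ℚ_[p]) ^ (k + k')‖ * ‖(p : ℚ_[p]) ^ (k + k')‖ := by
            rw [← norm_mul, div_mul_cancel₀]
            exact pow_ne_zero _ hp0
        _ ≤ 1 * (p : ℝ) ^ (-(k + k' : ℕ) : ℤ) := by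
            rw [Padic.norm_p_pow]
            exact mul_le_mul_of_nonneg_right h (by positivity)
        _ = _ := one_mul _
  have hdvd : ((p : ℤ) ^ (k + k')) ∣ N := (Padic.norm_int_le_pow_iff_dvd N (k + k')).1 hnorm
  have habs : |N| < (p : ℤ) ^ (k + k') := by
    rw [abs_sub_lt_iff]
    constructor
    · have : (m : ℤ) * p ^ k' < p ^ k * p ^ k' := by
        have := hm; have h2 : (0:ℤ) ≤ (m' : ℤ) * p ^ k := by positivity
        nlinarith [pow_pos (Int.natCast_pos.2 hp.out.pos) k']
      calc (m : ℤ) * p ^ k' - (m' : ℤ) * p ^ k ≤ (m : ℤ) * p ^ k' := by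
            have : (0:ℤ) ≤ (m' : ℤ) * p ^ k := by positivity
            omega
        _ < (p:ℤ) ^ k * p ^ k' := this
        _ = (p:ℤ) ^ (k + k') := (pow_add _ _ _).symm
    · have h1 : (m' : ℤ) * p ^ k < p ^ k' * p ^ k := by
        have hb := hm'
        nlinarith [pow_pos (Int.natCast_pos.2 hp.out.pos) k]
      have h0 : (0:ℤ) ≤ (m : ℤ) * p ^ k' := by positivity
      calc (m' : ℤ) * p ^ k - (m : ℤ) * p ^ k' ≤ (m' : ℤ) * p ^ k := by omega
        _ < (p:ℤ) ^ k' * p ^ k := h1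
        _ = (p:ℤ) ^ (k + k') := by rw [← pow_add, add_comm]
  have hN0 : N = 0 := Int.eq_zero_of_abs_lt_dvd hdvd habs
  have : (N : ℚ_[p]) = 0 := by exact_mod_cast congrArg (Int.cast : ℤ → ℚ_[p]) hN0
  have := hc
  rw [sub_eq_iff_eq_add] at this
  rw [this, ‹(N : ℚ_[p]) = 0›, zero_div, zero_add]

variable {q : ℚ_[p]} {T : ℤ_[p] → ℤ_[p]}

/-- Local linearity: if `‖q·(x-y)‖ ≤ 1` then `T x - T y = q (x - y)`. -/
lemma step_eq (hT : IsDigitTrunc q T) {x y : ℤ_[p]}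
    (h : ‖q * ((x : ℚ_[p]) - (y : ℚ_[p]))‖ ≤ 1) :
    ((T x - T y : ℤ_[p]) : ℚ_[p]) = q * ((x : ℚ_[p]) - (y : ℚ_[p])) := by
  obtain ⟨m, k, hm, hx⟩ := hT x
  obtain ⟨m', k', hm', hy⟩ := hT y
  have key : ((T x - T y : ℤ_[p]) : ℚ_[p])
      = q * ((x : ℚ_[p]) - (y : ℚ_[p]))
        - ((m : ℚ_[p]) / (p : ℚ_[p]) ^ k - (m' : ℚ_[p]) / (p : ℚ_[p]) ^ k') := by
    push_cast [hx, hy]; ring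
  have hnorm : ‖(m : ℚ_[p]) / (p : ℚ_[p]) ^ k - (m' : ℚ_[p]) / (p : ℚ_[p]) ^ k'‖ ≤ 1 := by
    have : (m : ℚ_[p]) / (p : ℚ_[p]) ^ k - (m' : ℚ_[p]) / (p : ℚ_[p]) ^ k'
        = q * ((x : ℚ_[p]) - (y : ℚ_[p])) - ((T x - T y : ℤ_[p]) : ℚ_[p]) := by
      rw [key]; ring
    rw [this, sub_eq_add_neg]
    refine (Padic.nonarchimedean _ _).trans (max_le h ?_)
    rw [norm_neg, ← PadicInt.norm_def]
    exact PadicInt.norm_le_one _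
  rw [key, frac_diff_eq_zero hm hm' hnorm, sub_self, sub_zero]

lemma iter_eq (hT : IsDigitTrunc q T) :
    ∀ (n : ℕ) (x y : ℤ_[p]), (max ‖q‖ 1) ^ n * ‖x - y‖ ≤ 1 →
      ((T^[n] x - T^[n] y : ℤ_[p]) : ℚ_[p]) = q ^ n * ((x : ℚ_[p]) - (y : ℚ_[p])) := by
  intro n
  induction n with
  | zero => intro x y _; simp [PadicInt.coe_sub]
  | succ n ih =>
    intro x y h
    have hQ1 : (1:ℝ) ≤ max ‖q‖ 1 := le_max_right _ _
    have hxy : ‖(x : ℚ_[p]) - (y : ℚ_[p])‖ = ‖x - y‖ := by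
      rw [PadicInt.norm_def, PadicInt.coe_sub]
    have hQle : max ‖q‖ 1 ≤ (max ‖q‖ 1) ^ (n + 1) := le_self_pow₀ hQ1 n.succ_ne_zero
    have hstep : ‖q * ((x : ℚ_[p]) - (y : ℚ_[p]))‖ ≤ 1 := by
      rw [norm_mul, hxy]
      calc ‖q‖ * ‖x - y‖ ≤ max ‖q‖ 1 * ‖x - y‖ :=
            mul_le_mul_of_nonneg_right (le_max_left _ _) (norm_nonneg _)
        _ ≤ (max ‖q‖ 1) ^ (n + 1) * ‖x - y‖ :=
            mul_le_mul_of_nonneg_right hQle (norm_nonneg _)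
        _ ≤ 1 := h
    have heq := step_eq hT hstep
    have hTnorm : ‖T x - T y‖ = ‖q‖ * ‖x - y‖ := by
      rw [PadicInt.norm_def, heq, norm_mul, hxy]
    have h' : (max ‖q‖ 1) ^ n * ‖T x - T y‖ ≤ 1 := by
      rw [hTnorm]
      calc (max ‖q‖ 1) ^ n * (‖q‖ * ‖x - y‖)
          ≤ (max ‖q‖ 1) ^ n * (max ‖q‖ 1 * ‖x - y‖) := by
            apply mul_le_mul_of_nonneg_left _ (by positivity)
            exact mul_le_mul_of_nonneg_right (le_max_left _ _) (norm_nonneg _)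
        _ = (max ‖q‖ 1) ^ (n + 1) * ‖x - y‖ := by ring
        _ ≤ 1 := h
    have := ih (T x) (T y) h'
    rw [Function.iterate_succ_apply, Function.iterate_succ_apply, this, ← PadicInt.coe_sub, heq]
    ring

lemma norm_iter (hT : IsDigitTrunc q T) {n : ℕ} {x y : ℤ_[p]}
    (h : (max ‖q‖ 1) ^ n * ‖x - y‖ ≤ 1) :
    ‖T^[n] x - T^[n] y‖ = ‖q‖ ^ n * ‖x - y‖ := by
  rw [PadicInt.norm_def, iter_eq hT n x y h, norm_mul, norm_pow]
  congr 1

lemma back_iter (hT : IsDigitTrunc q T) {r : ℕ} (hq : ‖q‖ = (p : ℝ) ^ r) :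
    ∀ (n : ℕ) (x y : ℤ_[p]), (∀ k < n, ‖T^[k] x - T^[k] y‖ ≤ ((p : ℝ) ^ r)⁻¹) →
      ‖x - y‖ ≤ (((p : ℝ) ^ r)⁻¹) ^ n := by
  have hp0 : (0:ℝ) < (p:ℝ) := by exact_mod_cast hp.out.pos
  have hppos : (0:ℝ) < (p : ℝ) ^ r := by positivity
  intro n
  induction n with
  | zero => intro x y _; simpa using PadicInt.norm_le_one (x - y)
  | succ n ih =>
    intro x y h
    have h0 : ‖x - y‖ ≤ ((p : ℝ) ^ r)⁻¹ := by simpa using h 0 n.succ_pos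
    have hxy : ‖(x : ℚ_[p]) - (y : ℚ_[p])‖ = ‖x - y‖ := by
      rw [PadicInt.norm_def, PadicInt.coe_sub]
    have hstep : ‖q * ((x : ℚ_[p]) - (y : ℚ_[p]))‖ ≤ 1 := by
      rw [norm_mul, hq, hxy]
      calc (p : ℝ) ^ r * ‖x - y‖ ≤ (p : ℝ) ^ r * ((p : ℝ) ^ r)⁻¹ :=
            mul_le_mul_of_nonneg_left h0 hppos.le
        _ = 1 := mul_inv_cancel₀ hppos.ne'
    have heq := step_eq hT hstep
    have hTnorm : ‖T x - T y‖ = (p : ℝ) ^ r * ‖x - y‖ := by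
      rw [PadicInt.norm_def, heq, norm_mul, hxy, hq]
    have hih : ‖T x - T y‖ ≤ (((p : ℝ) ^ r)⁻¹) ^ n := by
      apply ih
      intro k hk
      have := h (k + 1) (by omega)
      simpa [Function.iterate_succ_apply] using this
    have : ‖x - y‖ = ((p : ℝ) ^ r)⁻¹ * ‖T x - T y‖ := by
      rw [hTnorm]; field_simp
    rw [this, pow_succ']
    exact mul_le_mul_of_nonneg_left hih (by positivity)

lemma limsup_pow_div (p : ℕ) (hp1 : 1 < p) (a b : ℕ) :
    atTop.limsup (fun n : ℕ => ENNReal.log ((p : ℝ≥0∞) ^ (a + b * n)) / (n : EReal))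
      = ((b * Real.log p : ℝ) : EReal) := by
  set L := Real.log p with hL
  have hconv : Tendsto (fun n : ℕ => ((((a + b * n : ℕ) : ℝ) * L / n : ℝ) : EReal)) atTop
      (nhds ((b * L : ℝ) : EReal)) := by
    rw [EReal.tendsto_coe]
    have h1 : Tendsto (fun n : ℕ => ((a : ℝ) * L) / n + b * L) atTop (nhds (b * L)) := by
      have := (tendsto_const_div_atTop_nhds_zero_nat ((a:ℝ) * L)).add
        (tendsto_const_nhds (x := (b:ℝ) * L) (f := atTop (α := ℕ)))
      simpa using this
    apply h1.congr'
    filter_upwards [eventually_ge_atTop 1] with n hn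
    have hn0 : (n : ℝ) ≠ 0 := by positivity
    push_cast
    field_simp
  have heq : ∀ᶠ n : ℕ in atTop,
      ENNReal.log ((p : ℝ≥0∞) ^ (a + b * n)) / (n : EReal)
        = ((((a + b * n : ℕ) : ℝ) * L / n : ℝ) : EReal) := by
    filter_upwards [eventually_ge_atTop 1] with n hn
    have hplog : ENNReal.log ((p : ℝ≥0∞)) = (L : EReal) := by
      rw [ENNReal.log_pos_real (by exact_mod_cast (Nat.pos_of_ne_zero (by omega)).ne') (ENNReal.natCast_ne_top p)]
      simp [hL]
    rw [ENNReal.log_pow, hplog, EReal.coe_div, EReal.coe_mul]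
    norm_cast
  rw [limsup_congr heq]
  exact hconv.limsup_eq

lemma sep_cast {K j j' : ℕ} (hj : j < p ^ K) (hj' : j' < p ^ K)
    (h : ‖(j : ℤ_[p]) - (j' : ℤ_[p])‖ ≤ ((p : ℝ)⁻¹) ^ K) : j = j' := by
  have hcast : (j : ℤ_[p]) - (j' : ℤ_[p]) = (((j : ℤ) - (j' : ℤ) : ℤ) : ℤ_[p]) := by push_cast; ring
  have hpow : ((p : ℝ)⁻¹) ^ K = (p : ℝ) ^ (-(K : ℤ)) := by
    rw [inv_pow, ← zpow_natCast, ← zpow_neg]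
  rw [hcast, hpow, PadicInt.norm_int_le_pow_iff_dvd] at h
  have habs : |(j : ℤ) - (j' : ℤ)| < (p : ℤ) ^ K := by
    have h1 : ((j : ℤ)) < (p : ℤ) ^ K := by exact_mod_cast hj
    have h2 : ((j' : ℤ)) < (p : ℤ) ^ K := by exact_mod_cast hj'
    rw [abs_sub_lt_iff]; omega
  have := Int.eq_zero_of_abs_lt_dvd h habs
  omega

lemma appr_close (y : ℤ_[p]) (K : ℕ) : ‖(y.appr K : ℤ_[p]) - y‖ ≤ ((p : ℝ)⁻¹) ^ K := by
  have hpow : ((p : ℝ)⁻¹) ^ K = (p : ℝ) ^ (-(K : ℤ)) := by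
    rw [inv_pow, ← zpow_natCast, ← zpow_neg]
  rw [hpow, norm_sub_rev, PadicInt.norm_le_pow_iff_mem_span_pow]
  exact y.appr_spec K

lemma entropy_le (hT : IsDigitTrunc q T) {r : ℕ} (hq : ‖q‖ ≤ (p : ℝ) ^ r) :
    Dynamics.coverEntropy T Set.univ ≤ ((r * Real.log p : ℝ) : EReal) := by
  classical
  have hp1 : 1 < p := hp.out.one_lt
  have hP1 : 1 < (p : ℝ) := by exact_mod_cast hp1
  have hP0 : (0 : ℝ) < (p : ℝ)⁻¹ := by positivity
  have hPlt : (p : ℝ)⁻¹ < 1 := inv_lt_one_of_one_lt₀ hP1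
  have hbasis := Metric.uniformity_basis_dist_le_pow (α := ℤ_[p]) hP0 hPlt
  rw [Dynamics.coverEntropy_eq_iSup_basis hbasis T Set.univ]
  refine iSup₂_le fun M _ => ?_
  -- the cover by balls of radius `p^-(M + r*n)`
  have hcover : ∀ n : ℕ, Dynamics.IsDynCoverOf T Set.univ
      { pq : ℤ_[p] × ℤ_[p] | dist pq.1 pq.2 ≤ ((p : ℝ)⁻¹) ^ M } n
      ((Finset.range (p ^ (M + r * n))).image (Nat.cast : ℕ → ℤ_[p])) := by
    intro n y _
    set K := M + r * n with hK
    set x : ℤ_[p] := (y.appr K : ℤ_[p]) with hx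
    have hmem : x ∈ ((Finset.range (p ^ K)).image (Nat.cast : ℕ → ℤ_[p]) : Finset ℤ_[p]) :=
      Finset.mem_image_of_mem _ (Finset.mem_range.2 (y.appr_lt K))
    refine ⟨x, hmem, ?_⟩
    rw [Dynamics.mem_dynEntourage]
    intro k hk
    have hxy : ‖x - y‖ ≤ ((p : ℝ)⁻¹) ^ K := appr_close y K
    have hQ : max ‖q‖ 1 ≤ (p : ℝ) ^ r := max_le hq (one_le_pow₀ hP1.le)
    have hkey : ((p : ℝ) ^ r) ^ k * ((p : ℝ)⁻¹) ^ K ≤ ((p : ℝ)⁻¹) ^ M := by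
      have hrk : r * k ≤ r * n := Nat.mul_le_mul_left r hk.le
      rw [← pow_mul, inv_pow, inv_pow, ← div_eq_mul_inv, inv_eq_one_div,
        div_le_div_iff₀ (by positivity) (by positivity), one_mul, ← pow_add]
      exact pow_le_pow_right₀ hP1.le (by omega)
    have hcond : (max ‖q‖ 1) ^ k * ‖x - y‖ ≤ 1 := by
      calc (max ‖q‖ 1) ^ k * ‖x - y‖ ≤ ((p : ℝ) ^ r) ^ k * ((p : ℝ)⁻¹) ^ K := by
            apply mul_le_mul (pow_le_pow_left₀ (by positivity) hQ k) hxy (norm_nonneg _) (by positivity)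
        _ ≤ ((p : ℝ)⁻¹) ^ M := hkey
        _ ≤ 1 := pow_le_one₀ hP0.le hPlt.le
    have hnorm := norm_iter hT hcond
    show dist (T^[k] y) (T^[k] x) ≤ _
    rw [dist_comm]
    rw [dist_eq_norm]
    calc ‖T^[k] x - T^[k] y‖ = ‖q‖ ^ k * ‖x - y‖ := hnorm
      _ ≤ ((p : ℝ) ^ r) ^ k * ((p : ℝ)⁻¹) ^ K :=
          mul_le_mul (pow_le_pow_left₀ (norm_nonneg _) (le_trans (le_max_left _ _) hQ) k) hxy
            (norm_nonneg _) (by positivity)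
      _ ≤ ((p : ℝ)⁻¹) ^ M := hkey
  -- conclude
  have hmincard : ∀ n : ℕ, Dynamics.coverMincard T Set.univ
      { pq : ℤ_[p] × ℤ_[p] | dist pq.1 pq.2 ≤ ((p : ℝ)⁻¹) ^ M } n ≤ ((p ^ (M + r * n) : ℕ) : ℕ∞) := by
    intro n
    refine le_trans (hcover n).coverMincard_le_card ?_
    exact_mod_cast le_trans (Finset.card_image_le) (le_of_eq (Finset.card_range _))
  rw [← limsup_pow_div p hp1 M r]
  refine limsup_le_limsup (Filter.Eventually.of_forall fun n => ?_)
  exact EReal.monotone_div_right_of_nonneg (Nat.cast_nonneg' n) (ENNReal.log_monotone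
    (le_trans (ENat.toENNReal_mono (hmincard n)) (le_of_eq (by push_cast; rfl))))

lemma entropy_ge (hT : IsDigitTrunc q T) {r : ℕ} (hq : ‖q‖ = (p : ℝ) ^ r) :
    ((r * Real.log p : ℝ) : EReal) ≤ Dynamics.coverEntropy T Set.univ := by
  classical
  have hp1 : 1 < p := hp.out.one_lt
  have hP1 : 1 < (p : ℝ) := by exact_mod_cast hp1
  have hP0 : (0 : ℝ) < (p : ℝ)⁻¹ := by positivity
  have hPlt : (p : ℝ)⁻¹ < 1 := inv_lt_one_of_one_lt₀ hP1
  have hbasis := Metric.uniformity_basis_dist_le_pow (α := ℤ_[p]) hP0 hPlt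
  set U : Set (ℤ_[p] × ℤ_[p]) := { pq | dist pq.1 pq.2 ≤ ((p : ℝ)⁻¹) ^ r } with hUdef
  have hU : U ∈ uniformity ℤ_[p] := hbasis.mem_of_mem (i := r) trivial
  refine le_trans ?_ (Dynamics.netEntropyEntourage_le_coverEntropy T Set.univ hU)
  -- the net of integer points
  have hnet : ∀ n : ℕ, Dynamics.IsDynNetIn T Set.univ U n
      ((Finset.range (p ^ (r * n))).image (Nat.cast : ℕ → ℤ_[p]) : Finset ℤ_[p]) := by
    intro n
    refine ⟨Set.subset_univ _, ?_⟩
    intro x hx x' hx' hne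
    simp only [Finset.coe_image, Finset.coe_range, Set.mem_image, Set.mem_Iio] at hx hx'
    obtain ⟨j, hj, rfl⟩ := hx
    obtain ⟨j', hj', rfl⟩ := hx'
    rw [Function.onFun, Set.disjoint_left]
    intro y hy hy'
    rw [Dynamics.mem_ball_dynEntourage] at hy hy'
    have hdist : ∀ (z : ℤ_[p]), (∀ k < n, T^[k] y ∈ UniformSpace.ball (T^[k] z) U) →
        ‖z - y‖ ≤ ((p : ℝ)⁻¹) ^ (r * n) := by
      intro z hz
      have hb := back_iter hT hq n z y ?_
      · calc ‖z - y‖ ≤ (((p : ℝ) ^ r)⁻¹) ^ n := hb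
          _ = ((p : ℝ)⁻¹) ^ (r * n) := by rw [← inv_pow, ← pow_mul]
      · intro k hk
        have := hz k hk
        simp only [UniformSpace.ball, Set.mem_preimage, hUdef, Set.mem_setOf_eq] at this
        rw [dist_eq_norm] at this
        calc ‖T^[k] z - T^[k] y‖ ≤ ((p : ℝ)⁻¹) ^ r := this
          _ = ((p : ℝ) ^ r)⁻¹ := by rw [inv_pow]
    have h1 := hdist _ hy
    have h2 := hdist _ hy'
    have hsub : ‖(j : ℤ_[p]) - (j' : ℤ_[p])‖ ≤ ((p : ℝ)⁻¹) ^ (r * n) := by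
      have : (j : ℤ_[p]) - (j' : ℤ_[p]) = ((j : ℤ_[p]) - y) + (y - (j' : ℤ_[p])) := by ring
      rw [this]
      refine le_trans (PadicInt.nonarchimedean _ _) (max_le h1 ?_)
      rw [norm_sub_rev]
      exact h2
    exact hne (by rw [sep_cast hj hj' hsub])
  have hcard : ∀ n : ℕ,
      ((Finset.range (p ^ (r * n))).image (Nat.cast : ℕ → ℤ_[p])).card = p ^ (r * n) := by
    intro n
    rw [Finset.card_image_of_injOn, Finset.card_range]
    intro j hj j' hj' hjj
    rw [Finset.coe_range, Set.mem_Iio] at hj hj'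
    refine sep_cast hj hj' ?_
    rw [hjj, sub_self, norm_zero]
    positivity
  have hmax : ∀ n : ℕ, ((p ^ (r * n) : ℕ) : ℕ∞) ≤ Dynamics.netMaxcard T Set.univ U n := by
    intro n
    have := (hnet n).card_le_netMaxcard
    rwa [hcard n] at this
  rw [Dynamics.netEntropyEntourage, ← limsup_pow_div p hp1 0 r]
  refine limsup_le_limsup (Filter.Eventually.of_forall fun n => ?_)
  refine EReal.monotone_div_right_of_nonneg (Nat.cast_nonneg' n) (ENNReal.log_monotone ?_)
  refine le_trans (le_of_eq (by push_cast; rw [zero_add])) (ENat.toENNReal_mono (hmax n))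

/-- The topological entropy of the `p`-adic `q`-transformation is `0` when `|q|_p ≤ 1`,
is `r·log p` when `|q|_p = p^r > 1`, and in all cases equals `log⁺|q|_p`. -/
theorem qTransform_entropy (p : ℕ) [Fact p.Prime] (q : ℚ_[p])
    (T : ℤ_[p] → ℤ_[p]) (hT : IsDigitTrunc q T) :
    (‖q‖ ≤ 1 → Dynamics.coverEntropy T Set.univ = 0) ∧
    (∀ r : ℕ, 1 ≤ r → ‖q‖ = (p : ℝ) ^ r →
      Dynamics.coverEntropy T Set.univ = ((r * Real.log p : ℝ) : EReal)) ∧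
    Dynamics.coverEntropy T Set.univ = ((max (Real.log ‖q‖) 0 : ℝ) : EReal) := by
  have hP1 : 1 < (p : ℝ) := by exact_mod_cast (Fact.out : p.Prime).one_lt
  have hzero : ‖q‖ ≤ 1 → Dynamics.coverEntropy T Set.univ = 0 := by
    intro h1
    refine le_antisymm ?_ (Dynamics.coverEntropy_nonneg T Set.univ_nonempty)
    have := entropy_le hT (r := 0) (by simpa using h1)
    simpa using this
  have hpow : ∀ r : ℕ, ‖q‖ = (p : ℝ) ^ r →
      Dynamics.coverEntropy T Set.univ = ((r * Real.log p : ℝ) : EReal) :=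
    fun r hq => le_antisymm (entropy_le hT hq.le) (entropy_ge hT hq)
  refine ⟨hzero, fun r _ hq => hpow r hq, ?_⟩
  by_cases h1 : ‖q‖ ≤ 1
  · rw [hzero h1, max_eq_right (Real.log_nonpos (norm_nonneg q) h1)]
    norm_num
  · push_neg at h1
    have hq0 : q ≠ 0 := by
      intro h; rw [h, norm_zero] at h1; linarith
    have hval : ‖q‖ = (p : ℝ) ^ (-q.valuation) := Padic.norm_eq_zpow_neg_valuation hq0
    have hvpos : 0 < -q.valuation := by
      by_contra hv
      push_neg at hv
      have : (p : ℝ) ^ (-q.valuation) ≤ 1 := zpow_le_one_of_nonpos₀ hP1.le hv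
      rw [← hval] at this; linarith
    set r : ℕ := (-q.valuation).toNat with hr
    have hqr : ‖q‖ = (p : ℝ) ^ r := by
      rw [hval, ← zpow_natCast, hr, Int.toNat_of_nonneg hvpos.le]
    rw [hpow r hqr, hqr, Real.log_pow,
      max_eq_left (by positivity)]
end

section
/- For q ∈ ℚ_p with |q|_p > 1, the transformation T_q on ℤ_p is ergodic with respect to Haar measure. -/
open MeasureTheory

open scoped ENNReal

namespace QErgAux

variable {p : ℕ} [Fact p.Prime]

theorem frac_lt_one (m k : ℕ) (hm : m < p ^ k) : (m : ℚ) / (p:ℚ)^k < 1 := by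
  have hp : (0:ℚ) < p := by exact_mod_cast (Fact.out : p.Prime).pos
  rw [div_lt_one (by positivity)]
  exact_mod_cast hm

theorem key_diff (q : ℚ_[p]) (T : ℤ_[p] → ℤ_[p]) (hT : IsDigitTrunc q T)
    (s : ℕ) (hs : ‖q‖ = (p:ℝ)^(s:ℤ))
    (x a : ℤ_[p]) (h : ‖x - a‖ ≤ (p:ℝ)^(-(s:ℤ))) :
    ((T x : ℚ_[p]) = (T a : ℚ_[p]) + q * ((x : ℚ_[p]) - a)) := by
  obtain ⟨m, k, hm, hx⟩ := hT x
  obtain ⟨m', k', hm', ha⟩ := hT a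
  have hp1 : (1:ℝ) < p := by exact_mod_cast (Fact.out : p.Prime).one_lt
  set r : ℚ := (m' : ℚ)/(p:ℚ)^k' - (m:ℚ)/(p:ℚ)^k with hr
  have hcast : ((r : ℚ) : ℚ_[p]) = ((T x : ℚ_[p]) - (T a : ℚ_[p])) - q * ((x:ℚ_[p]) - a) := by
    rw [hx, ha, hr]
    push_cast
    ring
  -- norm bound
  have hnorm1 : ‖((T x : ℚ_[p]) - (T a : ℚ_[p]))‖ ≤ 1 := by
    have : ((T x : ℚ_[p]) - (T a : ℚ_[p])) = ((T x - T a : ℤ_[p]) : ℚ_[p]) := by push_cast; ring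
    rw [this, ← PadicInt.norm_def]
    exact PadicInt.norm_le_one _
  have hnorm2 : ‖q * ((x:ℚ_[p]) - a)‖ ≤ 1 := by
    rw [norm_mul]
    have hxa : ‖((x:ℚ_[p]) - a)‖ ≤ (p:ℝ)^(-(s:ℤ)) := by
      have : ((x:ℚ_[p]) - a) = ((x - a : ℤ_[p]) : ℚ_[p]) := by push_cast; ring
      rw [this, ← PadicInt.norm_def]; exact h
    calc ‖q‖ * ‖((x:ℚ_[p]) - a)‖ ≤ (p:ℝ)^(s:ℤ) * (p:ℝ)^(-(s:ℤ)) := by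
          apply mul_le_mul (le_of_eq hs) hxa (norm_nonneg _) (by positivity)
      _ = 1 := by rw [← zpow_add₀ (by positivity : (p:ℝ) ≠ 0)]; simp
  have hrnorm : ‖((r:ℚ) : ℚ_[p])‖ ≤ 1 := by
    rw [hcast, sub_eq_add_neg]
    refine le_trans (Padic.nonarchimedean _ _) (max_le hnorm1 (by simpa using hnorm2))
  -- r has p-power denominator and |r| < 1, norm ≤ 1 ⇒ r = 0
  have hr0 : r = 0 := by
    set z : ℤ := (m' : ℤ) * p^k - (m:ℤ) * p^k' with hz
    have hp0 : (p:ℚ) ≠ 0 := by exact_mod_cast (Fact.out : p.Prime).pos.ne'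
    have hpk : ((p:ℚ))^(k+k') ≠ 0 := pow_ne_zero _ hp0
    have hrz : r = (z : ℚ) / (p:ℚ)^(k+k') := by
      rw [eq_div_iff hpk, hr, hz]
      push_cast
      field_simp
      ring
    have hznorm : ‖((z:ℤ) : ℚ_[p])‖ ≤ (p:ℝ)^(-((k+k':ℕ)) : ℤ) := by
      have hcast2 : ((z:ℤ) : ℚ_[p]) = ((r:ℚ):ℚ_[p]) * ((p:ℚ_[p]))^(k+k') := by
        rw [hrz]; push_cast
        field_simp
        rw [mul_div_cancel_right₀ _ (pow_ne_zero _ (by exact_mod_cast (Fact.out : p.Prime).pos.ne'))]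
      rw [hcast2, norm_mul]
      rw [Padic.norm_p_pow]
      calc ‖((r:ℚ):ℚ_[p])‖ * (p:ℝ)^(-((k+k':ℕ)):ℤ) ≤ 1 * (p:ℝ)^(-((k+k':ℕ)):ℤ) := by
            apply mul_le_mul_of_nonneg_right hrnorm (by positivity)
        _ = _ := one_mul _
    have hdvd : ((p:ℤ))^(k+k') ∣ z := (Padic.norm_int_le_pow_iff_dvd z (k+k')).mp hznorm
    obtain ⟨w, hw⟩ := hdvd
    have hrw : r = (w : ℚ) := by
      rw [hrz, hw]; push_cast; field_simp
    have habs : |r| < 1 := by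
      rw [hr, abs_sub_lt_iff]
      have h1 := frac_lt_one m k hm
      have h2 := frac_lt_one m' k' hm'
      have h3 : (0:ℚ) ≤ (m:ℚ)/(p:ℚ)^k := by positivity
      have h4 : (0:ℚ) ≤ (m':ℚ)/(p:ℚ)^k' := by positivity
      constructor <;> linarith
    rw [hrw] at habs
    have habs' : |(w:ℤ)| < 1 := by exact_mod_cast habs
    rw [abs_lt] at habs'
    have : w = 0 := by omega

    rw [hrw, this]; simp
  rw [hr0] at hcast
  push_cast at hcast
  linear_combination -hcast

/-- the closed ball of radius `p^{-n}` -/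
def pball (c : ℤ_[p]) (n : ℕ) : Set ℤ_[p] := {x | ‖x - c‖ ≤ (p:ℝ)^(-(n:ℤ))}

theorem mem_pball {c x : ℤ_[p]} {n : ℕ} : x ∈ pball c n ↔ ‖x - c‖ ≤ (p:ℝ)^(-(n:ℤ)) := Iff.rfl

theorem pball_eq_closedBall (c : ℤ_[p]) (n : ℕ) :
    pball c n = Metric.closedBall c ((p:ℝ)^(-(n:ℤ))) := by
  ext x; simp [pball, Metric.mem_closedBall, dist_eq_norm]

theorem measurableSet_pball (c : ℤ_[p]) (n : ℕ) : MeasurableSet (pball c n) := by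
  rw [pball_eq_closedBall]; exact measurableSet_closedBall

theorem pball_zero (c : ℤ_[p]) : pball c 0 = Set.univ := by
  ext x
  simp only [pball, Set.mem_setOf_eq, Set.mem_univ, iff_true, Nat.cast_zero, neg_zero, zpow_zero]
  exact PadicInt.norm_le_one _

theorem norm_sub_le_max (a b c : ℤ_[p]) : ‖a - c‖ ≤ max ‖a - b‖ ‖b - c‖ := by
  have h := PadicInt.nonarchimedean (a - b) (b - c)
  have e : a - b + (b - c) = a - c := by ring
  rwa [e] at h

theorem pball_mono (c : ℤ_[p]) {m n : ℕ} (h : n ≤ m) : pball c m ⊆ pball c n := by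
  intro y hy
  have hp1 : (1:ℝ) ≤ p := by exact_mod_cast (Fact.out : p.Prime).one_lt.le
  exact le_trans hy (zpow_le_zpow_right₀ hp1 (by omega))

theorem pball_recenter {c x : ℤ_[p]} {n : ℕ} (hx : x ∈ pball c n) : pball c n = pball x n := by
  ext y
  constructor <;> intro hy
  · refine le_trans (norm_sub_le_max y c x) (max_le hy ?_)
    rwa [norm_sub_rev]
  · refine le_trans (norm_sub_le_max y x c) (max_le hy hx)

theorem pball_inter_same (x : ℤ_[p]) (a b : ℕ) :
    pball x a ∩ pball x b = pball x (max a b) := by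
  rcases le_total a b with h | h
  · rw [Nat.max_eq_right h, Set.inter_eq_right.2 (pball_mono x h)]
  · rw [Nat.max_eq_left h, Set.inter_eq_left.2 (pball_mono x h)]

/-- the collection of balls with radius `p^{-Ns}` -/
def Cb (s : ℕ) : Set (Set ℤ_[p]) := {S | ∃ c N, S = pball c (N * s)}

theorem isPiSystem_Cb (s : ℕ) : IsPiSystem (Cb (p := p) s) := by
  rintro _ ⟨c, N, rfl⟩ _ ⟨c', N', rfl⟩ hne
  obtain ⟨x, hx1, hx2⟩ := hne
  refine ⟨x, max N N', ?_⟩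
  rw [pball_recenter hx1, pball_recenter hx2, pball_inter_same]
  congr 1
  rcases le_total N N' with h | h
  · rw [Nat.max_eq_right h, Nat.max_eq_right (Nat.mul_le_mul_right s h)]
  · rw [Nat.max_eq_left h, Nat.max_eq_left (Nat.mul_le_mul_right s h)]

theorem isOpen_pball (c : ℤ_[p]) (n : ℕ) : IsOpen (pball c n) := by
  have : pball c n = Metric.ball c ((p:ℝ)^((-(n:ℤ)) + 1)) := by
    ext x
    rw [mem_pball, Metric.mem_ball, dist_eq_norm,
      PadicInt.norm_le_pow_iff_norm_lt_pow_add_one]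
  rw [this]
  exact Metric.isOpen_ball

theorem isTopologicalBasis_Cb (s : ℕ) (hs1 : 1 ≤ s) :
    TopologicalSpace.IsTopologicalBasis (Cb (p := p) s) := by
  have hp1 : (1:ℝ) < p := by exact_mod_cast (Fact.out : p.Prime).one_lt
  have hp0 : (0:ℝ) < p := lt_trans one_pos hp1
  refine TopologicalSpace.isTopologicalBasis_of_isOpen_of_nhds ?_ ?_
  · rintro _ ⟨c, N, rfl⟩; exact isOpen_pball c _
  · intro a u hau hu
    obtain ⟨ε, hε, hball⟩ := Metric.isOpen_iff.mp hu a hau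
    obtain ⟨n, hn⟩ := exists_pow_lt_of_lt_one hε (by rw [inv_lt_one_iff₀]; right; exact hp1 : (p:ℝ)⁻¹ < 1)
    refine ⟨pball a (n * s), ⟨a, n, rfl⟩, ?_, fun y hy => hball ?_⟩
    · rw [mem_pball, sub_self, norm_zero]; positivity
    · rw [Metric.mem_ball, dist_eq_norm]
      calc ‖y - a‖ ≤ (p:ℝ)^(-((n*s:ℕ)):ℤ) := hy
        _ ≤ (p:ℝ)^(-(n:ℤ)) := by
            apply zpow_le_zpow_right₀ hp1.le
            have : n ≤ n * s := Nat.le_mul_of_pos_right n (by omega)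
            omega
        _ = ((p:ℝ)⁻¹)^n := by rw [zpow_neg, zpow_natCast, inv_pow]
        _ < ε := hn

theorem borel_eq_Cb (s : ℕ) (hs1 : 1 ≤ s) :
    (inferInstance : MeasurableSpace ℤ_[p]) = MeasurableSpace.generateFrom (Cb s) :=
  BorelSpace.measurable_eq.trans (isTopologicalBasis_Cb s hs1).borel_eq_generateFrom

theorem pball_cover (n : ℕ) (x : ℤ_[p]) : x ∈ pball ((x.appr n : ℕ) : ℤ_[p]) n :=
  (PadicInt.norm_le_pow_iff_mem_span_pow _ n).mpr (PadicInt.appr_spec n x)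

theorem pball_disjoint {n k k' : ℕ} (hk : k < p^n) (hk' : k' < p^n) (hne : k ≠ k') :
    Disjoint (pball ((k:ℕ) : ℤ_[p]) n) (pball ((k':ℕ) : ℤ_[p]) n) := by
  rw [Set.disjoint_left]
  intro x hx hx'
  have h1 : ‖((k : ℤ_[p]) - (k' : ℤ_[p]))‖ ≤ (p:ℝ)^(-(n:ℤ)) := by
    refine le_trans (norm_sub_le_max _ x _) (max_le ?_ hx')
    rwa [norm_sub_rev]
  have h2 : (((k:ℤ) - (k':ℤ) : ℤ) : ℤ_[p]) = (k : ℤ_[p]) - (k' : ℤ_[p]) := by push_cast; ring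
  rw [← h2] at h1
  have hdvd : ((p:ℤ))^n ∣ ((k:ℤ) - k') := PadicInt.norm_int_le_pow_iff_dvd.mp h1
  have : ((k:ℤ) - k') = 0 := by
    refine Int.eq_zero_of_abs_lt_dvd hdvd ?_
    rw [abs_sub_lt_iff]
    constructor <;> [skip; skip] <;>
    · have : ((k:ℤ)) < (p:ℤ)^n := by exact_mod_cast hk
      have : ((k':ℤ)) < (p:ℤ)^n := by exact_mod_cast hk'
      omega
  exact hne (by exact_mod_cast sub_eq_zero.mp this)

section Measure

variable (μ : Measure ℤ_[p]) [μ.IsAddHaarMeasure] [IsProbabilityMeasure μ]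

theorem meas_pball_center (c : ℤ_[p]) (n : ℕ) : μ (pball c n) = μ (pball 0 n) := by
  have h : pball c n = (fun x => (-c) + x) ⁻¹' (pball 0 n) := by
    ext x
    rw [mem_pball, Set.mem_preimage, mem_pball]
    have e : (-c) + x - 0 = x - c := by ring
    rw [e]
  rw [h, measure_preimage_add]

theorem meas_pball (c : ℤ_[p]) (n : ℕ) : μ (pball c n) = ((p:ℝ≥0∞)^n)⁻¹ := by
  have hp0 : (p:ℝ≥0∞) ≠ 0 := by exact_mod_cast (Fact.out : p.Prime).pos.ne'
  have hpt : (p:ℝ≥0∞) ≠ ⊤ := ENNReal.natCast_ne_top p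
  have hcover : (Set.univ : Set ℤ_[p]) = ⋃ k ∈ Finset.range (p^n), pball ((k:ℕ) : ℤ_[p]) n := by
    ext x
    simp only [Set.mem_univ, true_iff, Set.mem_iUnion, Finset.mem_range]
    exact ⟨x.appr n, PadicInt.appr_lt x n, pball_cover n x⟩
  have hdisj : (Finset.range (p^n) : Set ℕ).PairwiseDisjoint
      (fun k => pball ((k:ℕ) : ℤ_[p]) n) := by
    intro a ha b hb hab
    simp only [Finset.coe_range, Set.mem_Iio] at ha hb
    exact pball_disjoint ha hb hab
  have h1 : (1 : ℝ≥0∞) = ∑ k ∈ Finset.range (p^n), μ (pball ((k:ℕ) : ℤ_[p]) n) := by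
    rw [← measure_biUnion_finset hdisj (fun k _ => measurableSet_pball _ _), ← hcover,
      measure_univ]
  rw [Finset.sum_congr rfl (fun k _ => meas_pball_center μ ((k:ℕ) : ℤ_[p]) n),
    Finset.sum_const, Finset.card_range, nsmul_eq_mul] at h1
  have hcast : ((p^n : ℕ) : ℝ≥0∞) = (p:ℝ≥0∞)^n := by push_cast; ring
  rw [hcast] at h1
  have h2 : μ (pball (0 : ℤ_[p]) n) = 1 / (p:ℝ≥0∞)^n :=
    (ENNReal.eq_div_iff (pow_ne_zero n hp0) (ENNReal.pow_ne_top hpt)).mpr h1.symm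
  rw [meas_pball_center μ c n, h2, one_div]

end Measure


section Dyn

theorem neg_cast_add (n m : ℕ) :
    (-((n+m:ℕ)) : ℤ) = -(n:ℤ) + (-(m:ℤ)) := by push_cast; ring

theorem pow_split (n m : ℕ) : (p:ℝ)^(-((n+m:ℕ)):ℤ) = (p:ℝ)^(-(n:ℤ)) / (p:ℝ)^(m:ℤ) := by
  have hp1 : (1:ℝ) < p := by exact_mod_cast (Fact.out : p.Prime).one_lt
  have hp0 : (0:ℝ) < p := lt_trans one_pos hp1
  rw [div_eq_mul_inv, ← zpow_neg, ← zpow_add₀ hp0.ne', neg_cast_add]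


variable (q : ℚ_[p]) (T : ℤ_[p] → ℤ_[p]) (hT : IsDigitTrunc q T)
variable (s : ℕ) (hs : ‖q‖ = (p:ℝ)^(s:ℤ))

include hT hs

theorem T_norm (x a : ℤ_[p]) (h : ‖x - a‖ ≤ (p:ℝ)^(-(s:ℤ))) :
    ‖T x - T a‖ = (p:ℝ)^(s:ℤ) * ‖x - a‖ := by
  have hd := key_diff q T hT s hs x a h
  have e : ((T x - T a : ℤ_[p]) : ℚ_[p]) = q * ((x : ℚ_[p]) - a) := by
    push_cast
    rw [hd]; ring
  have e2 : ((x - a : ℤ_[p]) : ℚ_[p]) = ((x : ℚ_[p]) - a) := by push_cast; ring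
  rw [PadicInt.norm_def, e, norm_mul, hs, PadicInt.norm_def, e2]

theorem T_cont : Continuous T := by
  have hp1 : (1:ℝ) < p := by exact_mod_cast (Fact.out : p.Prime).one_lt
  have hp0 : (0:ℝ) < p := lt_trans one_pos hp1
  rw [Metric.continuous_iff]
  intro b ε hε
  refine ⟨min ((p:ℝ)^(-(s:ℤ))) (ε * (p:ℝ)^(-(s:ℤ))),
    lt_min (zpow_pos hp0 _) (mul_pos hε (zpow_pos hp0 _)), fun a hab => ?_⟩
  rw [dist_eq_norm] at hab ⊢
  have h1 : ‖a - b‖ ≤ (p:ℝ)^(-(s:ℤ)) := le_of_lt (lt_of_lt_of_le hab (min_le_left _ _))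
  rw [T_norm q T hT s hs a b h1]
  calc (p:ℝ)^(s:ℤ) * ‖a - b‖ < (p:ℝ)^(s:ℤ) * (ε * (p:ℝ)^(-(s:ℤ))) :=
        mul_lt_mul_of_pos_left (lt_of_lt_of_le hab (min_le_right _ _)) (zpow_pos hp0 _)
    _ = ε * ((p:ℝ)^(s:ℤ) * (p:ℝ)^(-(s:ℤ))) := by ring
    _ = ε := by rw [← zpow_add₀ hp0.ne']; simp

theorem T_pball_iff {x c : ℤ_[p]} (hx : x ∈ pball c s) (n : ℕ) :
    T x ∈ pball (T c) n ↔ x ∈ pball c (n + s) := by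
  have hp1 : (1:ℝ) < p := by exact_mod_cast (Fact.out : p.Prime).one_lt
  have hp0 : (0:ℝ) < p := lt_trans one_pos hp1
  rw [mem_pball, mem_pball, T_norm q T hT s hs x c hx, pow_split,
    le_div_iff₀ (zpow_pos hp0 _), mul_comm]

/-- The preimage of a ball intersected with a branch domain is a ball. -/
theorem preimage_pball (hq0 : q ≠ 0) (a c : ℤ_[p]) (n : ℕ) :
    ∃ c' : ℤ_[p], T ⁻¹' (pball c n) ∩ pball a s = pball c' (n + s) := by
  have hp1 : (1:ℝ) < p := by exact_mod_cast (Fact.out : p.Prime).one_lt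
  have hp0 : (0:ℝ) < p := lt_trans one_pos hp1
  have hps1 : (p:ℝ)^(-(s:ℤ)) ≤ 1 := by
    calc (p:ℝ)^(-(s:ℤ)) ≤ (p:ℝ)^(0:ℤ) := zpow_le_zpow_right₀ hp1.le (by omega)
      _ = 1 := zpow_zero _
  have hqinv : ‖q⁻¹‖ = (p:ℝ)^(-(s:ℤ)) := by rw [norm_inv, hs, ← zpow_neg]
  have hcTa : ‖(c : ℚ_[p]) - (T a : ℚ_[p])‖ ≤ 1 := by
    have e : ((c - T a : ℤ_[p]) : ℚ_[p]) = (c : ℚ_[p]) - (T a : ℚ_[p]) := by push_cast; ring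
    rw [← e, ← PadicInt.norm_def]
    exact PadicInt.norm_le_one _
  have hq2 : ‖q⁻¹ * ((c : ℚ_[p]) - (T a : ℚ_[p]))‖ ≤ (p:ℝ)^(-(s:ℤ)) := by
    rw [norm_mul, hqinv]
    calc (p:ℝ)^(-(s:ℤ)) * ‖(c : ℚ_[p]) - (T a : ℚ_[p])‖ ≤ (p:ℝ)^(-(s:ℤ)) * 1 :=
          mul_le_mul_of_nonneg_left hcTa (le_of_lt (zpow_pos hp0 _))
      _ = _ := mul_one _
  have hc'mem : ‖(a : ℚ_[p]) + q⁻¹ * ((c : ℚ_[p]) - (T a : ℚ_[p]))‖ ≤ 1 := by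
    refine le_trans (Padic.nonarchimedean _ _) (max_le ?_ (le_trans hq2 hps1))
    rw [← PadicInt.norm_def]
    exact PadicInt.norm_le_one _
  set c' : ℤ_[p] := ⟨(a : ℚ_[p]) + q⁻¹ * ((c : ℚ_[p]) - (T a : ℚ_[p])), hc'mem⟩ with hc'def
  have hc'a : ‖c' - a‖ ≤ (p:ℝ)^(-(s:ℤ)) := by
    have e : ((c' - a : ℤ_[p]) : ℚ_[p]) = q⁻¹ * ((c : ℚ_[p]) - (T a : ℚ_[p])) := by
      rw [PadicInt.coe_sub, hc'def]
      push_cast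
      ring
    rw [PadicInt.norm_def, e]
    exact hq2
  have hmul : q * q⁻¹ = 1 := mul_inv_cancel₀ hq0
  have hrel : ∀ x : ℤ_[p], ‖x - a‖ ≤ (p:ℝ)^(-(s:ℤ)) →
      ‖T x - c‖ = (p:ℝ)^(s:ℤ) * ‖x - c'‖ := by
    intro x hxa
    have hcomp : ((T x - c : ℤ_[p]) : ℚ_[p]) = q * (((x - c' : ℤ_[p])) : ℚ_[p]) := by
      rw [PadicInt.coe_sub x c', hc'def]
      push_cast
      rw [key_diff q T hT s hs x a hxa]
      linear_combination ((c : ℚ_[p]) - (T a : ℚ_[p])) * hmul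
    rw [PadicInt.norm_def, hcomp, norm_mul, hs, ← PadicInt.norm_def]
  refine ⟨c', ?_⟩
  ext x
  simp only [Set.mem_inter_iff, Set.mem_preimage, mem_pball]
  constructor
  · rintro ⟨hTx, hxa⟩
    have h1 : (p:ℝ)^(s:ℤ) * ‖x - c'‖ ≤ (p:ℝ)^(-(n:ℤ)) := by
      rw [← hrel x hxa]; exact hTx
    rw [pow_split, le_div_iff₀ (zpow_pos hp0 _), mul_comm]
    exact h1
  · intro hxc'
    have hxa : ‖x - a‖ ≤ (p:ℝ)^(-(s:ℤ)) := by
      refine le_trans (norm_sub_le_max x c' a) (max_le ?_ hc'a)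
      refine le_trans hxc' ?_
      exact zpow_le_zpow_right₀ hp1.le (by push_cast; omega)
    refine ⟨?_, hxa⟩
    rw [hrel x hxa]
    rw [pow_split, le_div_iff₀ (zpow_pos hp0 _), mul_comm] at hxc'
    exact hxc'

theorem core_meas (μ : Measure ℤ_[p]) [μ.IsAddHaarMeasure] [IsProbabilityMeasure μ]
    (hs1 : 1 ≤ s) (hq0 : q ≠ 0) (hmeas : Measurable T)
    (a : ℤ_[p]) (A : Set ℤ_[p]) (hA : MeasurableSet A) :
    μ (T ⁻¹' A ∩ pball a s) = ((p:ℝ≥0∞)^s)⁻¹ * μ A := by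
  have hp0 : (p:ℝ≥0∞) ≠ 0 := by
    exact_mod_cast (Fact.out : p.Prime).pos.ne'
  have hpt : (p:ℝ≥0∞) ≠ ⊤ := ENNReal.natCast_ne_top p
  have hmain : (μ.restrict (pball a s)).map T = ((p:ℝ≥0∞)^s)⁻¹ • μ := by
    haveI : IsFiniteMeasure ((μ.restrict (pball a s)).map T) :=
      Measure.isFiniteMeasure_map _ _
    refine ext_of_generate_finite (Cb s) (borel_eq_Cb s hs1) (isPiSystem_Cb s) ?_ ?_
    · rintro _ ⟨c, N, rfl⟩
      rw [Measure.map_apply hmeas (measurableSet_pball _ _),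
        Measure.restrict_apply (hmeas (measurableSet_pball _ _))]
      obtain ⟨c', hc'⟩ := preimage_pball q T hT s hs hq0 a c (N*s)
      rw [hc', meas_pball, Measure.smul_apply, smul_eq_mul, meas_pball, pow_add,
        ENNReal.mul_inv (Or.inl (pow_ne_zero _ hp0)) (Or.inl (ENNReal.pow_ne_top hpt)),
        mul_comm]
    · rw [Measure.map_apply hmeas MeasurableSet.univ, Set.preimage_univ,
        Measure.restrict_apply_univ, meas_pball, Measure.smul_apply, smul_eq_mul,
        measure_univ, mul_one]
  have happ := congrArg (fun ν : Measure ℤ_[p] => ν A) hmain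
  simp only [Measure.smul_apply, smul_eq_mul] at happ
  rwa [Measure.map_apply hmeas hA, Measure.restrict_apply (hmeas hA)] at happ

end Dyn

end QErgAux

open QErgAux

/-- For `|q|_p > 1`, the `p`-adic `q`-transformation is ergodic with respect to Haar
measure on `ℤ_p`. -/
theorem qTransform_ergodic (p : ℕ) [Fact p.Prime] (q : ℚ_[p]) (hq : 1 < ‖q‖)
    (T : ℤ_[p] → ℤ_[p]) (hT : IsDigitTrunc q T)
    (μ : Measure ℤ_[p]) [μ.IsAddHaarMeasure] [IsProbabilityMeasure μ] :
    Ergodic T μ := by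
  have hp1 : (1:ℝ) < p := by exact_mod_cast (Fact.out : p.Prime).one_lt
  have hp0 : (0:ℝ) < p := lt_trans one_pos hp1
  have hq0 : q ≠ 0 := by
    intro h
    rw [h, norm_zero] at hq
    linarith
  -- extract `s` with `‖q‖ = p ^ s`, `1 ≤ s`
  obtain ⟨s, hs1, hs⟩ : ∃ s : ℕ, 1 ≤ s ∧ ‖q‖ = (p:ℝ)^(s:ℤ) := by
    have hval : ‖q‖ = (p:ℝ)^(-q.valuation) := Padic.norm_eq_zpow_neg_valuation hq0
    have hneg : 0 < -q.valuation := by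
      by_contra hcon
      push_neg at hcon
      have : (p:ℝ)^(-q.valuation) ≤ (p:ℝ)^(0:ℤ) := zpow_le_zpow_right₀ hp1.le hcon
      rw [zpow_zero] at this
      rw [hval] at hq
      linarith
    refine ⟨(-q.valuation).toNat, by omega, ?_⟩
    rw [hval]
    congr 1
    omega
  have hpe0 : (p:ℝ≥0∞) ≠ 0 := by exact_mod_cast (Fact.out : p.Prime).pos.ne'
  have hpet : (p:ℝ≥0∞) ≠ ⊤ := ENNReal.natCast_ne_top p
  have hmeas : Measurable T := (T_cont q T hT s hs).measurable
  -- measure preservation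
  have hpre : ∀ A : Set ℤ_[p], MeasurableSet A → μ (T ⁻¹' A) = μ A := by
    intro A hA
    have hdecomp : T ⁻¹' A = ⋃ k ∈ Finset.range (p^s), (T ⁻¹' A ∩ pball ((k:ℕ) : ℤ_[p]) s) := by
      ext x
      simp only [Set.mem_iUnion, Finset.mem_range, Set.mem_inter_iff, exists_prop]
      constructor
      · intro hx
        exact ⟨x.appr s, PadicInt.appr_lt x s, hx, pball_cover s x⟩
      · rintro ⟨k, _, hx, _⟩
        exact hx
    have hdisj : (Finset.range (p^s) : Set ℕ).PairwiseDisjoint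
        (fun k => T ⁻¹' A ∩ pball ((k:ℕ) : ℤ_[p]) s) := by
      intro a ha b hb hab
      simp only [Finset.coe_range, Set.mem_Iio] at ha hb
      exact Disjoint.mono Set.inter_subset_right Set.inter_subset_right
        (pball_disjoint ha hb hab)
    rw [hdecomp, measure_biUnion_finset hdisj
      (fun k _ => (hmeas hA).inter (measurableSet_pball _ _))]
    rw [Finset.sum_congr rfl
      (fun k _ => core_meas q T hT s hs μ hs1 hq0 hmeas ((k:ℕ) : ℤ_[p]) A hA)]
    rw [Finset.sum_const, Finset.card_range, nsmul_eq_mul]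
    have hcast : ((p^s : ℕ) : ℝ≥0∞) = (p:ℝ≥0∞)^s := by push_cast; ring
    rw [hcast, ← mul_assoc, ENNReal.mul_inv_cancel (pow_ne_zero _ hpe0)
      (ENNReal.pow_ne_top hpet), one_mul]
  refine ⟨⟨hmeas, ?_⟩, ⟨?_⟩⟩
  · exact Measure.ext fun A hA => by rw [Measure.map_apply hmeas hA]; exact hpre A hA
  · -- pre-ergodicity
    intro E hE hTE
    have hind : ∀ N (c : ℤ_[p]), μ (E ∩ pball c (N*s)) = μ E * ((p:ℝ≥0∞)^(N*s))⁻¹ := by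
      intro N
      induction N with
      | zero =>
        intro c
        simp [pball_zero]
      | succ N ih =>
        intro c
        have hset : E ∩ pball c ((N+1)*s) = T ⁻¹' (E ∩ pball (T c) (N*s)) ∩ pball c s := by
          ext x
          simp only [Set.mem_inter_iff, Set.mem_preimage]
          constructor
          · rintro ⟨hxE, hxb⟩
            have hxs : x ∈ pball c s := by
              refine pball_mono c ?_ hxb
              calc s = 1 * s := (one_mul s).symm
                _ ≤ (N+1)*s := Nat.mul_le_mul_right s (by omega)
            have hTxE : T x ∈ E := by
              rw [← hTE] at hxE
              exact hxE
            have hTxb : T x ∈ pball (T c) (N*s) := by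
              rw [T_pball_iff q T hT s hs hxs (N*s)]
              rwa [← Nat.succ_mul]
            exact ⟨⟨hTxE, hTxb⟩, hxs⟩
          · rintro ⟨⟨hTxE, hTxb⟩, hxs⟩
            have hxE : x ∈ E := by
              rw [← hTE]
              exact hTxE
            refine ⟨hxE, ?_⟩
            rw [Nat.succ_mul]
            exact (T_pball_iff q T hT s hs hxs (N*s)).mp hTxb
        rw [hset, core_meas q T hT s hs μ hs1 hq0 hmeas c _
          (hE.inter (measurableSet_pball _ _)), ih (T c)]
        rw [Nat.succ_mul, pow_add,
          ENNReal.mul_inv (Or.inl (pow_ne_zero _ hpe0)) (Or.inl (ENNReal.pow_ne_top hpet))]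
        ring
    have hres : μ.restrict E = μ E • μ := by
      refine ext_of_generate_finite (Cb s) (borel_eq_Cb s hs1) (isPiSystem_Cb s) ?_ ?_
      · rintro _ ⟨c, N, rfl⟩
        rw [Measure.restrict_apply (measurableSet_pball c (N*s)), Set.inter_comm,
          Measure.smul_apply, smul_eq_mul, meas_pball]
        exact hind N c
      · rw [Measure.restrict_apply_univ, Measure.smul_apply, smul_eq_mul, measure_univ,
          mul_one]
    have h0 : μ E * μ Eᶜ = 0 := by
      have happ := congrArg (fun ν : Measure ℤ_[p] => ν Eᶜ) hres
      simp only [Measure.smul_apply, smul_eq_mul] at happ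
      rw [Measure.restrict_apply hE.compl, Set.compl_inter_self, measure_empty] at happ
      exact happ.symm
    rw [Filter.eventuallyConst_set']
    rcases mul_eq_zero.mp h0 with h | h
    · exact Or.inl (ae_eq_empty.mpr h)
    · exact Or.inr (ae_eq_univ.mpr h)
end

section
/- For q ∈ ℚ_p not a root of unity, log|Per_n(T_q)| = n·log⁺|q|_p for all n ≥ 1; in particular the exponential growth rate of periodic points of T_q equals its topological entropy log⁺|q|_p. -/
open Filter Topology

namespace QTAux

variable {p : ℕ} [hp : Fact p.Prime]

lemma frac_unique {m m' k k' : ℕ} (hm : m < p ^ k) (hm' : m' < p ^ k')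
    {z z' : ℚ_[p]} (hz : ‖z‖ ≤ 1) (hz' : ‖z'‖ ≤ 1)
    (h : z + (m : ℚ_[p]) / (p : ℚ_[p]) ^ k = z' + (m' : ℚ_[p]) / (p : ℚ_[p]) ^ k') :
    z = z' ∧ (m : ℚ_[p]) / (p : ℚ_[p]) ^ k = (m' : ℚ_[p]) / (p : ℚ_[p]) ^ k' := by
  have hp0 : (p : ℚ_[p]) ≠ 0 := by
    exact_mod_cast (Nat.cast_ne_zero (R := ℚ_[p])).2 hp.1.ne_zero
  have hppos : (0:ℤ) < (p:ℤ) := by exact_mod_cast hp.1.pos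
  have hAB : (m : ℚ_[p]) / (p : ℚ_[p]) ^ k - (m' : ℚ_[p]) / (p : ℚ_[p]) ^ k' = z' - z := by
    linear_combination h
  have key : (((m : ℤ) * p ^ k' - (m' : ℤ) * p ^ k : ℤ) : ℚ_[p])
      = (z' - z) * (p : ℚ_[p]) ^ (k + k') := by
    rw [← hAB]
    push_cast
    field_simp
    ring
  have hnorm : ‖(((m : ℤ) * p ^ k' - (m' : ℤ) * p ^ k : ℤ) : ℚ_[p])‖
      ≤ (p : ℝ) ^ (-(k + k' : ℕ) : ℤ) := by
    rw [key]
    have h1 : ‖z' - z‖ ≤ 1 := by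
      rw [sub_eq_add_neg]
      calc ‖z' + -z‖ ≤ max ‖z'‖ ‖-z‖ := Padic.nonarchimedean z' (-z)
      _ ≤ 1 := max_le hz' (by rwa [norm_neg])
    have h2 : ‖(p : ℚ_[p]) ^ (k + k')‖ = (p : ℝ) ^ (-(k + k' : ℕ) : ℤ) := by
      rw [norm_pow, Padic.norm_p, inv_pow, ← zpow_natCast (p:ℝ), ← zpow_neg]
    rw [norm_mul, h2]
    nth_rewrite 2 [← one_mul ((p : ℝ) ^ (-(k + k' : ℕ) : ℤ))]
    gcongr
  have hdvd := (Padic.norm_int_le_pow_iff_dvd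
    ((m : ℤ) * p ^ k' - (m' : ℤ) * p ^ k) (k + k')).mp hnorm
  have habs : |(m : ℤ) * p ^ k' - (m' : ℤ) * p ^ k| < (p : ℤ) ^ (k + k') := by
    have h1 : (m : ℤ) * p ^ k' < p ^ k * p ^ k' := by
      apply mul_lt_mul_of_pos_right (by exact_mod_cast hm)
      positivity
    have h2 : (m' : ℤ) * p ^ k < p ^ k' * p ^ k := by
      apply mul_lt_mul_of_pos_right (by exact_mod_cast hm')
      positivity
    have h3 : (0:ℤ) ≤ (m : ℤ) * p ^ k' := by positivity
    have h4 : (0:ℤ) ≤ (m' : ℤ) * p ^ k := by positivity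
    rw [abs_lt, pow_add]
    constructor <;> nlinarith
  have hdvd' : ((p:ℤ) ^ (k + k')) ∣ ((m : ℤ) * p ^ k' - (m' : ℤ) * p ^ k) := by
    exact_mod_cast hdvd
  have ha0 := Int.eq_zero_of_abs_lt_dvd hdvd' habs
  have hZ : (m : ℤ) * p ^ k' = (m' : ℤ) * p ^ k := by omega
  have hQ : (m : ℚ_[p]) * (p:ℚ_[p]) ^ k' = (m' : ℚ_[p]) * (p:ℚ_[p]) ^ k := by
    exact_mod_cast congrArg (Int.cast : ℤ → ℚ_[p]) hZ
  have heq : (m : ℚ_[p]) / (p : ℚ_[p]) ^ k = (m' : ℚ_[p]) / (p : ℚ_[p]) ^ k' := by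
    field_simp
    linear_combination hQ
  rw [heq] at h
  exact ⟨add_right_cancel h, heq⟩

lemma exists_digit {q : ℚ_[p]} {T : ℤ_[p] → ℤ_[p]} (hT : IsDigitTrunc q T) {v : ℕ}
    (hqv : ‖q‖ ≤ (p : ℝ) ^ v) (x : ℤ_[p]) :
    ∃ d : ℕ, d < p ^ v ∧ ((T x : ℚ_[p]) = q * (x : ℚ_[p]) - (d : ℚ_[p]) / (p : ℚ_[p]) ^ v) := by
  obtain ⟨m, k, hmk, hTx⟩ := hT x
  have hp1 : (1:ℝ) < p := by exact_mod_cast hp.1.one_lt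
  have hp0R : (p : ℝ) ≠ 0 := by positivity
  have hp0 : (p : ℚ_[p]) ≠ 0 := by
    exact_mod_cast (Nat.cast_ne_zero (R := ℚ_[p])).2 hp.1.ne_zero
  have hppos : 0 < p := hp.1.pos
  have hpv1 : (1:ℝ) ≤ (p:ℝ) ^ v := one_le_pow₀ (le_of_lt hp1)
  have hA : ‖(m:ℚ_[p]) / (p:ℚ_[p])^k‖ ≤ (p:ℝ)^v := by
    have hfr : (m:ℚ_[p]) / (p:ℚ_[p])^k = q * (x:ℚ_[p]) + -(T x : ℚ_[p]) := by
      linear_combination hTx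
    rw [hfr]
    calc ‖q * (x:ℚ_[p]) + -(T x : ℚ_[p])‖ ≤ max ‖q * (x:ℚ_[p])‖ ‖-(T x : ℚ_[p])‖ :=
          Padic.nonarchimedean _ _
    _ ≤ (p:ℝ)^v := by
        apply max_le
        · rw [norm_mul]
          calc ‖q‖ * ‖(x:ℚ_[p])‖ ≤ ‖q‖ * 1 :=
                mul_le_mul_of_nonneg_left x.2 (norm_nonneg q)
          _ ≤ (p:ℝ)^v := by rwa [mul_one]
        · rw [norm_neg]
          exact le_trans (T x).2 hpv1
  by_cases hkv : k ≤ v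
  · refine ⟨m * p ^ (v - k), ?_, ?_⟩
    · calc m * p ^ (v - k) < p ^ k * p ^ (v - k) := by
            have hpos : 0 < p ^ (v - k) := Nat.pow_pos hppos
            exact Nat.mul_lt_mul_of_lt_of_le hmk le_rfl hpos
      _ = p ^ v := by rw [← pow_add]; congr 1; omega
    · rw [hTx]
      congr 1
      have hsplit : (p:ℚ_[p]) ^ v = (p:ℚ_[p]) ^ (v - k) * (p:ℚ_[p]) ^ k := by
        rw [← pow_add]; congr 1; omega
      push_cast
      rw [hsplit]
      field_simp
  · push_neg at hkv
    have hnormk : ‖((p:ℚ_[p]))^k‖ = ((p:ℝ)⁻¹) ^ k := by rw [norm_pow, Padic.norm_p]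
    have hinvne : ((p:ℝ)⁻¹) ^ k ≠ 0 := by positivity
    have hm' : ‖(m:ℚ_[p])‖ = ‖(m:ℚ_[p]) / (p:ℚ_[p])^k‖ * ((p:ℝ)⁻¹)^k := by
      rw [norm_div, hnormk, div_mul_cancel₀ _ hinvne]
    have hnm : ‖(m:ℚ_[p])‖ ≤ (p:ℝ) ^ (-((k - v : ℕ) : ℤ)) := by
      rw [hm']
      calc ‖(m:ℚ_[p]) / (p:ℚ_[p])^k‖ * ((p:ℝ)⁻¹)^k ≤ (p:ℝ)^v * ((p:ℝ)⁻¹)^k := by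
            gcongr
      _ = (p:ℝ) ^ (-((k - v : ℕ) : ℤ)) := by
          rw [inv_pow, ← zpow_natCast (p:ℝ) v, ← zpow_natCast (p:ℝ) k, ← zpow_neg,
            ← zpow_add₀ hp0R]
          congr 1
          omega
    have hdvd : ((p:ℤ)) ^ (k - v) ∣ (m:ℤ) := by
      apply (Padic.norm_int_le_pow_iff_dvd (m:ℤ) (k - v)).mp
      exact_mod_cast hnm
    have hdvdN : p ^ (k - v) ∣ m := by exact_mod_cast hdvd
    obtain ⟨d, hd⟩ := hdvdN
    refine ⟨d, ?_, ?_⟩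
    · have hk : p ^ k = p ^ (k - v) * p ^ v := by rw [← pow_add]; congr 1; omega
      rw [hd, hk] at hmk
      exact Nat.lt_of_mul_lt_mul_left hmk
    · rw [hTx]
      congr 1
      have hsplit : (p:ℚ_[p]) ^ k = (p:ℚ_[p]) ^ (k - v) * (p:ℚ_[p]) ^ v := by
        rw [← pow_add]; congr 1; omega
      rw [hd]
      push_cast
      rw [hsplit]
      have hne : (p:ℚ_[p]) ^ (k - v) ≠ 0 := pow_ne_zero _ hp0
      field_simp

end QTAux

/-- For `q ∈ ℚ_p` not a root of unity, `log|Per_n(T_q)| = n·log⁺|q|_p` for all `n ≥ 1`;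
in particular the exponential growth rate of periodic points equals the topological
entropy `log⁺|q|_p`. -/
theorem qTransform_periodic_growth (p : ℕ) [Fact p.Prime] (q : ℚ_[p])
    (hroot : ∀ m : ℕ, 1 ≤ m → q ^ m ≠ 1) (T : ℤ_[p] → ℤ_[p]) (hT : IsDigitTrunc q T) :
    (∀ n : ℕ, 1 ≤ n →
      Real.log (Nat.card {x : ℤ_[p] // T^[n] x = x}) = n * max (Real.log ‖q‖) 0) ∧
    Tendsto (fun n : ℕ => Real.log (Nat.card {x : ℤ_[p] // T^[n] x = x}) / n) atTop
      (𝓝 (max (Real.log ‖q‖) 0)) := by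
  have hp1R : (1:ℝ) < p := by exact_mod_cast (Fact.out : p.Prime).one_lt
  have hp0Q : (p : ℚ_[p]) ≠ 0 := by
    exact_mod_cast (Nat.cast_ne_zero (R := ℚ_[p])).2 (Fact.out : p.Prime).ne_zero
  have key : ∀ n : ℕ, 1 ≤ n →
      Real.log (Nat.card {x : ℤ_[p] // T^[n] x = x}) = n * max (Real.log ‖q‖) 0 := by
    intro n hn
    by_cases hq1 : ‖q‖ ≤ 1
    · -- contracting case : T is multiplication by q and the only periodic point is 0
      set Q : ℤ_[p] := ⟨q, hq1⟩ with hQ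
      have hTQ : ∀ x : ℤ_[p], T x = Q * x := by
        intro x
        have hqx : ‖q * (x:ℚ_[p])‖ ≤ 1 := by
          rw [norm_mul]
          exact mul_le_one₀ hq1 (norm_nonneg _) x.2
        obtain ⟨m, k, hmk, hTx⟩ := hT x
        have h : ((T x : ℚ_[p])) + (m:ℚ_[p])/(p:ℚ_[p])^k
            = (q * (x:ℚ_[p])) + ((0:ℕ):ℚ_[p])/(p:ℚ_[p])^(0:ℕ) := by
          push_cast
          simp only [pow_zero, div_one, add_zero]
          linear_combination hTx
        have h0 : (0:ℕ) < p ^ (0:ℕ) := by norm_num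
        have := (QTAux.frac_unique hmk h0 (T x).2 hqx h).1
        apply Subtype.ext
        rw [this]
        push_cast
        rfl
      have hiter : ∀ x : ℤ_[p], ∀ j : ℕ, T^[j] x = Q ^ j * x := by
        intro x j
        induction j with
        | zero => simp
        | succ j ih => rw [Function.iterate_succ_apply', ih, hTQ, ← mul_assoc, ← pow_succ']
      have hQn : Q ^ n - 1 ≠ 0 := by
        intro hcon
        apply hroot n hn
        rw [sub_eq_zero] at hcon
        have : ((Q ^ n : ℤ_[p]) : ℚ_[p]) = ((1 : ℤ_[p]) : ℚ_[p]) := congrArg _ hcon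
        push_cast at this
        exact this
      have hfix : ∀ x : ℤ_[p], T^[n] x = x → x = 0 := by
        intro x hx
        rw [hiter] at hx
        have h0 : (Q ^ n - 1) * x = 0 := by rw [sub_mul, one_mul, hx, sub_self]
        rcases mul_eq_zero.mp h0 with h | h
        · exact absurd h hQn
        · exact h
      have hcard : Nat.card {x : ℤ_[p] // T^[n] x = x} = 1 := by
        rw [Nat.card_eq_one_iff_unique]
        refine ⟨⟨fun a b => ?_⟩, ⟨⟨0, by rw [hiter]; ring⟩⟩⟩
        exact Subtype.ext ((hfix a.1 a.2).trans (hfix b.1 b.2).symm)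
      have hmax : max (Real.log ‖q‖) 0 = 0 :=
        max_eq_right (Real.log_nonpos (norm_nonneg q) hq1)
      rw [hcard, hmax, mul_zero, Nat.cast_one, Real.log_one]
    · -- expanding case
      push_neg at hq1
      have hq0 : q ≠ 0 := by
        intro h
        rw [h, norm_zero] at hq1
        linarith
      have hval : ‖q‖ = (p:ℝ) ^ (-q.valuation) := Padic.norm_eq_zpow_neg_valuation hq0
      have hvpos : 0 < -q.valuation := by
        by_contra hcon
        push_neg at hcon
        have : (p:ℝ) ^ (-q.valuation) ≤ 1 := zpow_le_one_of_nonpos₀ (le_of_lt hp1R) hcon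
        rw [← hval] at this
        linarith
      set v : ℕ := (-q.valuation).toNat with hvdef
      have hvZ : ((v:ℤ)) = -q.valuation := Int.toNat_of_nonneg (le_of_lt hvpos)
      have hv : ‖q‖ = (p:ℝ) ^ v := by rw [hval, ← hvZ, zpow_natCast]
      choose d hdlt hdspec using QTAux.exists_digit hT (le_of_eq hv)
      have hqn1 : q ^ n - 1 ≠ 0 := sub_ne_zero.mpr (hroot n hn)
      have hnormqn : ‖q ^ n - 1‖ = ‖q‖ ^ n := by
        have h1 : ‖q ^ n‖ = ‖q‖ ^ n := norm_pow q n
        have hgt : (1:ℝ) < ‖q ^ n‖ := by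
          rw [h1]
          exact one_lt_pow₀ hq1 (by omega)
        have hne : ‖q ^ n‖ ≠ ‖(-1 : ℚ_[p])‖ := by
          rw [norm_neg, norm_one]
          linarith
        calc ‖q ^ n - 1‖ = ‖q ^ n + (-1)‖ := by ring_nf
        _ = max ‖q ^ n‖ ‖(-1:ℚ_[p])‖ := Padic.add_eq_max_of_ne hne
        _ = ‖q‖ ^ n := by rw [norm_neg, norm_one, max_eq_left (le_of_lt hgt), h1]
      have hcard : Nat.card {x : ℤ_[p] // T^[n] x = x} = (p ^ v) ^ n := by
        have hbij : Function.Bijective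
            (fun x : {x : ℤ_[p] // T^[n] x = x} =>
              fun j : Fin n => (⟨d (T^[(j:ℕ)] x.1), hdlt _⟩ : Fin (p ^ v))) := by
          constructor
          · intro x x' hxx
            have hdj : ∀ j, j < n → d (T^[j] x.1) = d (T^[j] x'.1) := by
              intro j hj
              exact congrArg Fin.val (congrFun hxx ⟨j, hj⟩)
            have step : ∀ j, j ≤ n →
                ((T^[j] x.1 : ℚ_[p]) - (T^[j] x'.1 : ℚ_[p]))
                  = q ^ j * ((x.1 : ℚ_[p]) - (x'.1 : ℚ_[p])) := by
              intro j
              induction j with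
              | zero => intro _; simp
              | succ j ih =>
                intro hj
                have hj' : j < n := by omega
                rw [Function.iterate_succ_apply', Function.iterate_succ_apply',
                  hdspec, hdspec, hdj j hj']
                have := ih (by omega)
                linear_combination q * this
            have hfin := step n le_rfl
            rw [x.2, x'.2] at hfin
            have hzero : (x.1:ℚ_[p]) - (x'.1:ℚ_[p]) = 0 := by
              have hmul : (q ^ n - 1) * ((x.1:ℚ_[p]) - (x'.1:ℚ_[p])) = 0 := by
                linear_combination -hfin
              rcases mul_eq_zero.mp hmul with h | h
              · exact absurd h hqn1
              · exact h
            exact Subtype.ext (Subtype.ext (sub_eq_zero.mp hzero))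
          · intro F
            have hn0 : 0 < n := by omega
            set f : ℕ → ℕ := fun i => (F ⟨i % n, Nat.mod_lt _ hn0⟩ : ℕ) with hfdef
            have hflt : ∀ i, f i < p ^ v := fun i => (F _).2
            have hfper : ∀ i, f (i + n) = f i := by
              intro i
              have hfin : (⟨(i + n) % n, Nat.mod_lt _ hn0⟩ : Fin n)
                  = ⟨i % n, Nat.mod_lt _ hn0⟩ := Fin.ext (by simp [Nat.add_mod_right])
              simp only [hfdef, hfin]
            set S : ℕ → ℚ_[p] :=
              fun i => ∑ j ∈ Finset.range n, q ^ (n - 1 - j) * (f (i + j) : ℚ_[p]) with hSdef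
            obtain ⟨w, hw⟩ : ∃ w, n = w + 1 := ⟨n - 1, by omega⟩
            have hrec : ∀ i, q * S i = S (i + 1) + (q ^ n - 1) * (f i : ℚ_[p]) := by
              intro i
              have lhs : q * S i = ∑ j ∈ Finset.range n, q ^ (n - j) * (f (i + j) : ℚ_[p]) := by
                simp only [hSdef]
                rw [Finset.mul_sum]
                apply Finset.sum_congr rfl
                intro j hj
                have hj' : j < n := Finset.mem_range.mp hj
                rw [← mul_assoc, ← pow_succ']
                have he : n - 1 - j + 1 = n - j := by omega
                rw [he]
              have lhs2 : ∑ j ∈ Finset.range n, q ^ (n - j) * (f (i + j) : ℚ_[p])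
                  = (∑ j ∈ Finset.range w, q ^ (w - j) * (f (i + 1 + j) : ℚ_[p]))
                    + q ^ n * (f i : ℚ_[p]) := by
                rw [hw, Finset.sum_range_succ']
                have e2 : (∑ j ∈ Finset.range w,
                      q ^ (w + 1 - (j + 1)) * (f (i + (j + 1)) : ℚ_[p]))
                    = ∑ j ∈ Finset.range w, q ^ (w - j) * (f (i + 1 + j) : ℚ_[p]) := by
                  apply Finset.sum_congr rfl
                  intro j hj
                  have h1 : w + 1 - (j + 1) = w - j := by omega
                  have h2 : i + (j + 1) = i + 1 + j := by omega
                  rw [h1, h2]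
                rw [e2]
                norm_num
              have rhs : S (i + 1)
                  = (∑ j ∈ Finset.range w, q ^ (w - j) * (f (i + 1 + j) : ℚ_[p]))
                    + (f i : ℚ_[p]) := by
                simp only [hSdef]
                rw [hw, Finset.sum_range_succ]
                have e2 : (∑ j ∈ Finset.range w,
                      q ^ (w + 1 - 1 - j) * (f (i + 1 + j) : ℚ_[p]))
                    = ∑ j ∈ Finset.range w, q ^ (w - j) * (f (i + 1 + j) : ℚ_[p]) := by
                  apply Finset.sum_congr rfl
                  intro j hj
                  have h1 : w + 1 - 1 - j = w - j := by omega
                  rw [h1]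
                have h3 : w + 1 - 1 - w = 0 := by omega
                have h4 : i + 1 + w = i + (w + 1) := by omega
                rw [e2, h3, pow_zero, one_mul, h4, ← hw, hfper]
              rw [lhs, lhs2, rhs]
              ring
            have hSnorm : ∀ i, ‖S i‖ ≤ ‖q‖ ^ (n - 1) := by
              intro i
              apply IsUltrametricDist.norm_sum_le_of_forall_le_of_nonneg (by positivity)
              intro j hj
              rw [norm_mul, norm_pow]
              have h1 : ‖(f (i+j) : ℚ_[p])‖ ≤ 1 := by
                have := Padic.norm_int_le_one (p := p) ((f (i+j) : ℕ) : ℤ)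
                push_cast at this
                exact this
              calc ‖q‖ ^ (n-1-j) * ‖(f (i+j):ℚ_[p])‖ ≤ ‖q‖ ^ (n-1-j) * 1 := by gcongr
              _ ≤ ‖q‖ ^ (n-1) := by
                  rw [mul_one]
                  exact pow_le_pow_right₀ (le_of_lt hq1) (by omega)
            set D : ℚ_[p] := (p:ℚ_[p]) ^ v * (q ^ n - 1) with hDdef
            have hD0 : D ≠ 0 := mul_ne_zero (pow_ne_zero _ hp0Q) hqn1
            have hDnorm : ‖D‖ = ((p:ℝ)^v) ^ (n - 1) := by
              rw [hDdef, norm_mul, norm_pow, Padic.norm_p, hnormqn, hv]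
              have hpow : ((p:ℝ)^v) ^ n = (p:ℝ)^v * ((p:ℝ)^v) ^ (n - 1) := by
                conv_lhs => rw [show n = 1 + (n - 1) by omega]
                rw [pow_add, pow_one]
              rw [hpow, inv_pow, ← mul_assoc, inv_mul_cancel₀ (by positivity), one_mul]
            have hynorm : ∀ i, ‖S i / D‖ ≤ 1 := by
              intro i
              rw [norm_div, hDnorm, div_le_one (by positivity)]
              calc ‖S i‖ ≤ ‖q‖ ^ (n-1) := hSnorm i
              _ = ((p:ℝ)^v)^(n-1) := by rw [hv]
            set y : ℕ → ℤ_[p] := fun i => ⟨S i / D, hynorm i⟩ with hydef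
            have hyrec : ∀ i, q * (S i / D) = S (i+1) / D + (f i : ℚ_[p]) / (p:ℚ_[p]) ^ v := by
              intro i
              rw [← mul_div_assoc, hrec i, add_div]
              congr 1
              rw [hDdef, mul_comm ((p:ℚ_[p]) ^ v) (q ^ n - 1),
                mul_div_mul_left _ _ hqn1]
            have hstep : ∀ i, T (y i) = y (i + 1) ∧ d (y i) = f i := by
              intro i
              have h1 : ((T (y i) : ℚ_[p])) + (d (y i) : ℚ_[p]) / (p:ℚ_[p])^v
                  = q * (S i / D) := by
                have h := hdspec (y i)
                have hcoe : ((y i : ℤ_[p]) : ℚ_[p]) = S i / D := rfl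
                rw [hcoe] at h
                linear_combination h
              have h2 : ((y (i+1) : ℤ_[p]) : ℚ_[p]) + (f i : ℚ_[p]) / (p:ℚ_[p])^v
                  = q * (S i / D) := by
                have hcoe : ((y (i+1) : ℤ_[p]) : ℚ_[p]) = S (i+1) / D := rfl
                rw [hcoe]
                linear_combination (hyrec i).symm
              have huniq := QTAux.frac_unique (hdlt (y i)) (hflt i)
                (T (y i)).2 (y (i+1)).2 (h1.trans h2.symm)
              refine ⟨Subtype.ext huniq.1, ?_⟩
              have h3 := huniq.2
              have hpvne : (p:ℚ_[p])^v ≠ 0 := pow_ne_zero _ hp0Q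
              field_simp at h3
              exact_mod_cast h3
            have hiter : ∀ j, T^[j] (y 0) = y j := by
              intro j
              induction j with
              | zero => rfl
              | succ j ih => rw [Function.iterate_succ_apply', ih, (hstep j).1]
            have hper : y n = y 0 := by
              apply Subtype.ext
              show S n / D = S 0 / D
              congr 1
              rw [hSdef]
              apply Finset.sum_congr rfl
              intro j hj
              congr 1
              have : n + j = j + n := by omega
              rw [this, hfper, Nat.zero_add]
            refine ⟨⟨y 0, by rw [hiter n, hper]⟩, ?_⟩
            funext j
            apply Fin.ext
            show d (T^[(j:ℕ)] (y 0)) = (F j : ℕ)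
            rw [hiter (j:ℕ), (hstep (j:ℕ)).2]
            simp only [hfdef]
            have hj : (⟨(j:ℕ) % n, Nat.mod_lt _ hn0⟩ : Fin n) = j :=
              Fin.ext (Nat.mod_eq_of_lt j.2)
            rw [hj]
        rw [Nat.card_eq_of_bijective _ hbij]
        simp [Nat.card_eq_fintype_card]
      rw [hcard]
      have hmax : max (Real.log ‖q‖) 0 = Real.log ‖q‖ :=
        max_eq_left (le_of_lt (Real.log_pos hq1))
      rw [hmax, hv]
      push_cast
      rw [Real.log_pow]
  refine ⟨key, ?_⟩
  have hev : ∀ᶠ n : ℕ in atTop,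
      max (Real.log ‖q‖) 0
        = Real.log (Nat.card {x : ℤ_[p] // T^[n] x = x}) / n := by
    rw [eventually_atTop]
    refine ⟨1, fun n hn => ?_⟩
    rw [key n hn]
    have hn0 : (n:ℝ) ≠ 0 := by
      exact_mod_cast Nat.one_le_iff_ne_zero.mp hn
    field_simp
  exact Tendsto.congr' hev tendsto_const_nhds
end

section
/- For β > 1 real, the β-transformation T_β(x) = βx mod 1 on [0,1) preserves a probability measure absolutely continuous with respect to Lebesgue measure. -/
open MeasureTheory
open scoped ENNReal

namespace RenyiAux

variable (β : ℝ)

/-- orbit of 1 under the β-transformation -/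
noncomputable def bt : ℕ → ℝ
  | 0 => 1
  | n+1 => Int.fract (β * bt n)

/-- digits -/
noncomputable def bD (n : ℕ) : ℕ := (⌊β * bt β n⌋).toNat

/-- Parry density, as an `ℝ≥0∞`-valued function -/
noncomputable def bg (x : ℝ) : ℝ≥0∞ :=
  ∑' n : ℕ, Set.indicator (Set.Ico (0:ℝ) (bt β n)) (fun _ => (ENNReal.ofReal (1/β))^n) x

variable {β} (hβ : 1 < β)

lemma bt_nonneg : ∀ n, 0 ≤ bt β n
  | 0 => zero_le_one
  | n+1 => Int.fract_nonneg _

lemma bt_le_one : ∀ n, bt β n ≤ 1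
  | 0 => le_refl 1
  | n+1 => (Int.fract_lt_one _).le

lemma bt_succ_lt_one (n : ℕ) : bt β (n+1) < 1 := Int.fract_lt_one _

include hβ

lemma hβ0 : (0:ℝ) < β := lt_trans one_pos hβ

lemma bD_add (n : ℕ) : (bD β n : ℝ) + bt β (n+1) = β * bt β n := by
  have h0 : (0:ℝ) ≤ β * bt β n := mul_nonneg (hβ0 hβ).le (bt_nonneg n)
  have hfl : (0:ℤ) ≤ ⌊β * bt β n⌋ := Int.floor_nonneg.mpr h0
  have h1 : (bD β n : ℝ) = (⌊β * bt β n⌋ : ℝ) := by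
    rw [bD]
    exact_mod_cast congrArg (fun z : ℤ => (z : ℝ)) (Int.toNat_of_nonneg hfl)
  rw [h1, bt, Int.fract]
  ring

lemma bD_le (n : ℕ) : (bD β n : ℝ) ≤ β := by
  have h := bD_add hβ n
  nlinarith [bt_nonneg (β := β) (n+1), bt_le_one (β := β) n, hβ0 hβ, bt_nonneg (β := β) n]

end RenyiAux

namespace RenyiAux
variable {β : ℝ} (hβ : 1 < β)
include hβ

lemma inv_lt_one' : 1/β < 1 := by
  rw [div_lt_one (hβ0 hβ)]; exact hβ

lemma inv_nonneg' : (0:ℝ) ≤ 1/β := by positivity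

/-- real telescoping sum -/
lemma tele_real : ∑' n : ℕ, (1/β)^(n+1) * (bD β n : ℝ) = 1 := by
  have hb0 := hβ0 hβ
  set f : ℕ → ℝ := fun n => (1/β)^n * bt β n with hf
  have hterm : ∀ n, (1/β)^(n+1) * (bD β n : ℝ) = f n - f (n+1) := by
    intro n
    have h := bD_add hβ n
    have hβne : β ≠ 0 := hb0.ne'
    have hD : (bD β n : ℝ) = β * bt β n - bt β (n+1) := by linarith
    simp only [hf, hD]
    have hpw : (1/β)^(n+1) * β = (1/β)^n := by
      rw [pow_succ, mul_assoc, one_div, inv_mul_cancel₀ hβne, mul_one]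
    linear_combination (bt β n) * hpw
  have hnonneg : ∀ n, 0 ≤ (1/β)^(n+1) * (bD β n : ℝ) := fun n => by positivity
  have hle : ∀ n, (1/β)^(n+1) * (bD β n : ℝ) ≤ (1/β)^n := by
    intro n
    have := bD_le hβ n
    have h1 : (1/β)^(n+1) * (bD β n : ℝ) ≤ (1/β)^(n+1) * β :=
      mul_le_mul_of_nonneg_left this (by positivity)
    calc (1/β)^(n+1) * (bD β n : ℝ) ≤ (1/β)^(n+1) * β := h1
      _ = (1/β)^n := by rw [pow_succ, mul_assoc, one_div, inv_mul_cancel₀ (hβ0 hβ).ne', mul_one]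
  have hsum : Summable (fun n => (1/β)^(n+1) * (bD β n : ℝ)) := by
    refine Summable.of_nonneg_of_le hnonneg hle ?_
    exact summable_geometric_of_lt_one (inv_nonneg' hβ) (inv_lt_one' hβ)
  have hten : Filter.Tendsto f Filter.atTop (nhds 0) := by
    have h1 : Filter.Tendsto (fun n : ℕ => (1/β)^n) Filter.atTop (nhds 0) :=
      tendsto_pow_atTop_nhds_zero_of_lt_one (inv_nonneg' hβ) (inv_lt_one' hβ)
    refine squeeze_zero (fun n => mul_nonneg (pow_nonneg (inv_nonneg' hβ) n) (bt_nonneg n)) (fun n => ?_) h1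
    simp only [hf]
    calc (1/β)^n * bt β n ≤ (1/β)^n * 1 :=
      mul_le_mul_of_nonneg_left (bt_le_one n) (pow_nonneg (inv_nonneg' hβ) n)
      _ = (1/β)^n := mul_one _
  have hpart : Filter.Tendsto (fun N => ∑ n ∈ Finset.range N, ((1/β)^(n+1) * (bD β n : ℝ)))
      Filter.atTop (nhds 1) := by
    have : ∀ N, ∑ n ∈ Finset.range N, ((1/β)^(n+1) * (bD β n : ℝ)) = f 0 - f N := by
      intro N
      rw [Finset.sum_congr rfl (fun n _ => hterm n)]
      exact Finset.sum_range_sub' f N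
    simp only [this]
    have : f 0 = 1 := by simp [hf, bt]
    rw [show (1:ℝ) = f 0 - 0 by rw [this]; ring]
    exact (tendsto_const_nhds).sub hten
  exact tendsto_nhds_unique hsum.hasSum.tendsto_sum_nat hpart

/-- ENNReal telescoping -/
lemma tele : ∑' n : ℕ, (ENNReal.ofReal (1/β))^(n+1) * (bD β n : ℝ≥0∞) = 1 := by
  have hnn : ∀ n : ℕ, 0 ≤ (1/β)^(n+1) * (bD β n : ℝ) := fun n => by positivity
  have hsum : Summable (fun n => (1/β)^(n+1) * (bD β n : ℝ)) := by
    refine Summable.of_nonneg_of_le hnn (fun n => ?_) (summable_geometric_of_lt_one (inv_nonneg' hβ) (inv_lt_one' hβ))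
    have := bD_le hβ n
    calc (1/β)^(n+1) * (bD β n : ℝ) ≤ (1/β)^(n+1) * β :=
        mul_le_mul_of_nonneg_left this (by positivity)
      _ = (1/β)^n := by rw [pow_succ, mul_assoc, one_div, inv_mul_cancel₀ (hβ0 hβ).ne', mul_one]
  have hterm : ∀ n : ℕ, (ENNReal.ofReal (1/β))^(n+1) * (bD β n : ℝ≥0∞)
      = ENNReal.ofReal ((1/β)^(n+1) * (bD β n : ℝ)) := by
    intro n
    rw [ENNReal.ofReal_mul (pow_nonneg (inv_nonneg' hβ) _),
      ENNReal.ofReal_pow (inv_nonneg' hβ), ENNReal.ofReal_natCast]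
  rw [tsum_congr hterm, ← ENNReal.ofReal_tsum_of_nonneg hnn hsum, tele_real hβ,
    ENNReal.ofReal_one]

omit hβ in
/-- counting -/
lemma count_lt (M : ℕ) : ∑' k : ℕ, (if k < M then (1:ℝ≥0∞) else 0) = M := by
  rw [tsum_eq_sum (s := Finset.range M) (fun k hk => by
    simp only [Finset.mem_range, not_lt] at hk
    simp [Nat.not_lt.mpr hk])]
  have h1 : ∀ k ∈ Finset.range M, (if k < M then (1:ℝ≥0∞) else 0) = 1 :=
    fun k hk => by simp [Finset.mem_range.mp hk]
  rw [Finset.sum_congr rfl h1]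
  simp

end RenyiAux

namespace RenyiAux
variable {β : ℝ} (hβ : 1 < β)
include hβ

/-- membership condition rewritten as a digit count -/
lemma cond_iff (y : ℝ) (hy0 : 0 ≤ y) (hy1 : y < 1) (n k : ℕ) :
    ((y + k)/β ∈ Set.Ico (0:ℝ) (bt β n)) ↔
      k < bD β n + (if y < bt β (n+1) then 1 else 0) := by
  have hb0 := hβ0 hβ
  have hD := bD_add hβ n
  have ht0 := bt_nonneg (β := β) (n+1)
  have ht1 := bt_succ_lt_one (β := β) n
  constructor
  · rintro ⟨-, h2⟩
    rw [div_lt_iff₀ hb0] at h2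
    have h3 : y + k < (bD β n : ℝ) + bt β (n+1) := by rw [hD]; linarith [h2]
    by_cases hy : y < bt β (n+1)
    · simp only [hy, if_pos]
      have : (k:ℝ) < (bD β n : ℝ) + 1 := by linarith
      have : k < bD β n + 1 := by exact_mod_cast this
      omega
    · push_neg at hy
      rw [if_neg (not_lt.mpr hy)]
      have : (k:ℝ) < (bD β n : ℝ) := by linarith
      have : k < bD β n := by exact_mod_cast this
      omega
  · intro h
    refine ⟨div_nonneg (by linarith [Nat.cast_nonneg (α := ℝ) k]) hb0.le, ?_⟩
    rw [div_lt_iff₀ hb0, mul_comm, ← hD]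
    by_cases hy : y < bt β (n+1)
    · simp only [hy, if_pos] at h
      have hk : k ≤ bD β n := by omega
      have : (k:ℝ) ≤ (bD β n : ℝ) := by exact_mod_cast hk
      linarith
    · push_neg at hy
      rw [if_neg (not_lt.mpr hy)] at h
      have hk : k + 1 ≤ bD β n := by omega
      have : (k:ℝ) + 1 ≤ (bD β n : ℝ) := by exact_mod_cast hk
      linarith

/-- the Perron–Frobenius fixed point identity -/
lemma PF (y : ℝ) (hy0 : 0 ≤ y) (hy1 : y < 1) :
    ∑' k : ℕ, ENNReal.ofReal (1/β) * bg β ((y + k)/β) = bg β y := by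
  set r : ℝ≥0∞ := ENNReal.ofReal (1/β) with hr
  -- LHS: swap sums, count
  have hswap : ∑' k : ℕ, bg β ((y + k)/β)
      = ∑' n : ℕ, ∑' k : ℕ, Set.indicator (Set.Ico (0:ℝ) (bt β n))
          (fun _ => r^n) ((y + k)/β) := by
    simp only [bg, ← hr]
    exact ENNReal.tsum_comm
  have hinner : ∀ n : ℕ, (∑' k : ℕ, Set.indicator (Set.Ico (0:ℝ) (bt β n))
      (fun _ => r^n) ((y + k)/β))
      = r^n * ((bD β n : ℝ≥0∞) + (if y < bt β (n+1) then 1 else 0)) := by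
    intro n
    set M : ℕ := bD β n + (if y < bt β (n+1) then 1 else 0) with hM
    have h1 : ∀ k : ℕ, Set.indicator (Set.Ico (0:ℝ) (bt β n)) (fun _ => r^n) ((y + k)/β)
        = r^n * (if k < M then (1:ℝ≥0∞) else 0) := by
      intro k
      rw [Set.indicator_apply]
      by_cases hc : (y + k)/β ∈ Set.Ico (0:ℝ) (bt β n)
      · rw [if_pos hc, if_pos ((cond_iff hβ y hy0 hy1 n k).mp hc), mul_one]
      · rw [if_neg hc, if_neg (fun h => hc ((cond_iff hβ y hy0 hy1 n k).mpr h)), mul_zero]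
    rw [tsum_congr h1, ENNReal.tsum_mul_left, count_lt M, hM]
    push_cast
    by_cases hy : y < bt β (n+1) <;> simp [hy]
  -- RHS: split off first term
  have hRHS : bg β y = 1 + ∑' n : ℕ, r^(n+1) * (if y < bt β (n+1) then 1 else 0) := by
    rw [bg, tsum_eq_zero_add' ENNReal.summable]
    congr 1
    · have : y ∈ Set.Ico (0:ℝ) (bt β 0) := ⟨hy0, by simpa [bt] using hy1⟩
      simp [Set.indicator_of_mem this]
    · refine tsum_congr fun n => ?_
      rw [Set.indicator_apply]
      by_cases hy : y < bt β (n+1)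
      · rw [if_pos (Set.mem_Ico.mpr ⟨hy0, hy⟩), if_pos hy, mul_one, hr]
      · rw [if_neg (fun h => hy (Set.mem_Ico.mp h).2), if_neg hy, mul_zero]
  calc ∑' k : ℕ, r * bg β ((y + k)/β)
      = r * ∑' k : ℕ, bg β ((y + k)/β) := ENNReal.tsum_mul_left
    _ = r * ∑' n : ℕ, r^n * ((bD β n : ℝ≥0∞) + (if y < bt β (n+1) then 1 else 0)) := by
        rw [hswap, tsum_congr hinner]
    _ = ∑' n : ℕ, (r^(n+1) * (bD β n : ℝ≥0∞) + r^(n+1) * (if y < bt β (n+1) then 1 else 0)) := by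
        rw [← ENNReal.tsum_mul_left]
        refine tsum_congr fun n => ?_
        rw [pow_succ]
        ring
    _ = 1 + ∑' n : ℕ, r^(n+1) * (if y < bt β (n+1) then 1 else 0) := by
        rw [ENNReal.tsum_add, tele hβ]
    _ = bg β y := hRHS.symm

end RenyiAux

namespace RenyiAux
variable {β : ℝ} (hβ : 1 < β)

lemma bg_measurable : Measurable (bg β) :=
  Measurable.ennreal_tsum fun _ => measurable_const.indicator measurableSet_Ico

lemma bg_zero {x : ℝ} (hx : x ∉ Set.Ico (0:ℝ) 1) : bg β x = 0 := by
  rw [bg, ENNReal.tsum_eq_zero]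
  intro n
  exact Set.indicator_of_notMem
    (fun hm => hx ⟨hm.1, lt_of_lt_of_le hm.2 (bt_le_one n)⟩) _

lemma bg_le (x : ℝ) : bg β x ≤ (1 - ENNReal.ofReal (1/β))⁻¹ := by
  rw [← ENNReal.tsum_geometric]
  refine ENNReal.tsum_le_tsum fun n => ?_
  by_cases hm : x ∈ Set.Ico (0:ℝ) (bt β n)
  · rw [Set.indicator_of_mem hm]
  · rw [Set.indicator_of_notMem hm]; exact zero_le

lemma one_le_bg {x : ℝ} (hx : x ∈ Set.Ico (0:ℝ) 1) : 1 ≤ bg β x := by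
  have h0 : Set.indicator (Set.Ico (0:ℝ) (bt β 0)) (fun _ => (ENNReal.ofReal (1/β))^0) x = 1 := by
    rw [Set.indicator_of_mem (by simpa [bt] using hx)]
    simp
  calc (1:ℝ≥0∞) = _ := h0.symm
    _ ≤ bg β x := ENNReal.le_tsum 0

include hβ

lemma r_lt_one : ENNReal.ofReal (1/β) < 1 := by
  rw [← ENNReal.ofReal_one]
  exact ENNReal.ofReal_lt_ofReal_iff_of_nonneg (inv_nonneg' hβ) |>.mpr (inv_lt_one' hβ)

/-- change of variables for one branch -/
lemma cov (k : ℕ) {s : Set ℝ} (hs : MeasurableSet s) :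
    ∫⁻ x in (fun x : ℝ => β * x - (k:ℝ)) ⁻¹' s, bg β x ∂volume
      = ENNReal.ofReal (1/β) * ∫⁻ y in s, bg β ((y + k)/β) ∂volume := by
  have hb0 := hβ0 hβ
  have hβne : β ≠ 0 := hb0.ne'
  set φ : ℝ → ℝ := fun x => β * x - (k:ℝ) with hφdef
  have hφ : Measurable φ := (measurable_const_mul β).sub measurable_const
  set F : ℝ → ℝ≥0∞ := Set.indicator s (fun y => bg β ((y + k)/β)) with hF
  have hFm : Measurable F :=
    ((bg_measurable).comp ((measurable_id.add_const _).div_const β)).indicator hs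
  have hcomp : ∀ x, Set.indicator (φ ⁻¹' s) (bg β) x = F (φ x) := by
    intro x
    by_cases hx : φ x ∈ s
    · rw [hF]
      rw [Set.indicator_of_mem hx]
      rw [Set.indicator_of_mem (show x ∈ φ ⁻¹' s from hx)]
      congr 1
      simp only [hφdef]
      field_simp
      ring
    · rw [hF]
      rw [Set.indicator_of_notMem hx]
      rw [Set.indicator_of_notMem (show x ∉ φ ⁻¹' s from hx)]
  have hmap : Measure.map φ volume = ENNReal.ofReal (1/β) • volume := by
    have h1 : φ = (fun z : ℝ => z + (-(k:ℝ))) ∘ (fun x : ℝ => β * x) := by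
      funext x; simp [hφdef]; ring
    rw [h1, ← Measure.map_map (measurable_add_const (-(k:ℝ))) (measurable_const_mul β),
      Real.map_volume_mul_left hβne, Measure.map_smul, map_add_right_eq_self,
      abs_of_pos (inv_pos.mpr hb0), one_div]
  calc ∫⁻ x in φ ⁻¹' s, bg β x ∂volume
      = ∫⁻ x, Set.indicator (φ ⁻¹' s) (bg β) x ∂volume :=
        (lintegral_indicator (hφ hs) _).symm
    _ = ∫⁻ x, F (φ x) ∂volume := by simp only [hcomp]
    _ = ∫⁻ y, F y ∂(Measure.map φ volume) := (lintegral_map hFm hφ).symm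
    _ = ENNReal.ofReal (1/β) * ∫⁻ y, F y ∂volume := by
        rw [hmap, lintegral_smul_measure, smul_eq_mul]
    _ = ENNReal.ofReal (1/β) * ∫⁻ y in s, bg β ((y + k)/β) ∂volume := by
        rw [hF, lintegral_indicator hs]

end RenyiAux

namespace RenyiAux
variable {β : ℝ} (hβ : 1 < β)

lemma nu_compl_zero : (volume.withDensity (bg β)) (Set.Ico (0:ℝ) 1)ᶜ = 0 := by
  rw [withDensity_apply _ measurableSet_Ico.compl,
    setLIntegral_congr_fun measurableSet_Ico.compl
      (fun x hx => bg_zero hx)]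
  simp

include hβ

lemma nu_preimage {s : Set ℝ} (hs : MeasurableSet s) :
    (volume.withDensity (bg β)) ((fun x : ℝ => Int.fract (β * x)) ⁻¹' s)
      = (volume.withDensity (bg β)) s := by
  have hb0 := hβ0 hβ
  set ν := volume.withDensity (bg β) with hν
  have hIco : MeasurableSet (Set.Ico (0:ℝ) 1) := measurableSet_Ico
  have hnull : ν (Set.Ico (0:ℝ) 1)ᶜ = 0 := nu_compl_zero
  have key : ∀ t : Set ℝ, ν t = ν (t ∩ Set.Ico (0:ℝ) 1) := by
    intro t
    have h1 := measure_inter_add_diff (μ := ν) t hIco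
    have h2 : ν (t \ Set.Ico 0 1) = 0 :=
      measure_mono_null (Set.diff_subset_compl t _) hnull
    rw [← h1, h2, add_zero]
  set s' := s ∩ Set.Ico (0:ℝ) 1 with hs'def
  have hs' : MeasurableSet s' := hs.inter hIco
  have hsub : s' ⊆ Set.Ico (0:ℝ) 1 := Set.inter_subset_right
  have hφm : ∀ k : ℕ, Measurable (fun x : ℝ => β * x - (k:ℝ)) :=
    fun k => (measurable_const_mul β).sub measurable_const
  have hTs : ((fun x : ℝ => Int.fract (β*x)) ⁻¹' s) ∩ Set.Ico 0 1
      = ((fun x : ℝ => Int.fract (β*x)) ⁻¹' s') ∩ Set.Ico 0 1 := by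
    ext x
    simp only [Set.mem_inter_iff, Set.mem_preimage, hs'def, Set.mem_inter_iff]
    constructor
    · rintro ⟨hx1, hx2⟩
      exact ⟨⟨hx1, Int.fract_nonneg _, Int.fract_lt_one _⟩, hx2⟩
    · rintro ⟨hx1, hx2⟩
      exact ⟨hx1.1, hx2⟩
  have hdecomp : ((fun x : ℝ => Int.fract (β*x)) ⁻¹' s') ∩ Set.Ico 0 1
      = ⋃ k : ℕ, ((fun x : ℝ => β * x - (k:ℝ)) ⁻¹' s') ∩ Set.Ico 0 1 := by
    ext x
    simp only [Set.mem_inter_iff, Set.mem_preimage, Set.mem_iUnion]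
    constructor
    · rintro ⟨hx1, hx2⟩
      have hx0 : 0 ≤ β * x := mul_nonneg hb0.le hx2.1
      refine ⟨⌊β * x⌋.toNat, ?_, hx2⟩
      have hcast : ((⌊β * x⌋.toNat : ℕ) : ℝ) = ((⌊β * x⌋ : ℤ) : ℝ) := by
        exact_mod_cast congrArg (fun z : ℤ => (z:ℝ))
          (Int.toNat_of_nonneg (Int.floor_nonneg.mpr hx0))
      show β * x - ((⌊β * x⌋.toNat : ℕ) : ℝ) ∈ s'
      rw [hcast]
      rw [Int.fract] at hx1
      exact hx1
    · rintro ⟨k, hk1, hk2⟩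
      refine ⟨?_, hk2⟩
      have hmem := hsub hk1
      have hfl : ⌊β * x⌋ = (k:ℤ) := by
        rw [Int.floor_eq_iff]
        push_cast
        exact ⟨by linarith [hmem.1], by linarith [hmem.2]⟩
      have hfr : Int.fract (β * x) = β * x - (k:ℝ) := by
        rw [Int.fract, hfl]
        push_cast
        ring
      rw [hfr]
      exact hk1
  have hdisj : Pairwise (Function.onFun Disjoint fun k : ℕ =>
      ((fun x : ℝ => β * x - (k:ℝ)) ⁻¹' s') ∩ Set.Ico 0 1) := by
    intro i j hij
    rw [Function.onFun, Set.disjoint_left]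
    rintro x ⟨hxi, -⟩ ⟨hxj, -⟩
    have h1 := hsub hxi
    have h2 := hsub hxj
    have hi : (i:ℝ) < (j:ℝ) + 1 := by
      simp only [Set.mem_Ico, Set.mem_preimage] at h1 h2
      linarith [h1.1, h2.2]
    have hj : (j:ℝ) < (i:ℝ) + 1 := by
      simp only [Set.mem_Ico, Set.mem_preimage] at h1 h2
      linarith [h2.1, h1.2]
    have hi' : i < j + 1 := by exact_mod_cast hi
    have hj' : j < i + 1 := by exact_mod_cast hj
    exact hij (by omega)
  have hmeasA : ∀ k : ℕ, MeasurableSet (((fun x : ℝ => β * x - (k:ℝ)) ⁻¹' s') ∩ Set.Ico 0 1) :=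
    fun k => ((hφm k) hs').inter hIco
  have hgk : ∀ k : ℕ, Measurable (fun y : ℝ => bg β ((y + (k:ℝ))/β)) :=
    fun k => (bg_measurable).comp ((measurable_id.add_const _).div_const β)
  calc ν ((fun x : ℝ => Int.fract (β*x)) ⁻¹' s)
      = ν (((fun x : ℝ => Int.fract (β*x)) ⁻¹' s) ∩ Set.Ico 0 1) := key _
    _ = ν (⋃ k : ℕ, ((fun x : ℝ => β * x - (k:ℝ)) ⁻¹' s') ∩ Set.Ico 0 1) := by
        rw [hTs, hdecomp]
    _ = ∑' k : ℕ, ν (((fun x : ℝ => β * x - (k:ℝ)) ⁻¹' s') ∩ Set.Ico 0 1) :=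
        measure_iUnion hdisj hmeasA
    _ = ∑' k : ℕ, ν ((fun x : ℝ => β * x - (k:ℝ)) ⁻¹' s') :=
        tsum_congr fun k => (key _).symm
    _ = ∑' k : ℕ, ENNReal.ofReal (1/β) * ∫⁻ y in s', bg β ((y + k)/β) ∂volume := by
        refine tsum_congr fun k => ?_
        rw [hν, withDensity_apply _ ((hφm k) hs'), cov hβ k hs']
    _ = ∑' k : ℕ, ∫⁻ y in s', ENNReal.ofReal (1/β) * bg β ((y + k)/β) ∂volume := by
        refine tsum_congr fun k => ?_
        rw [lintegral_const_mul _ (hgk k)]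
    _ = ∫⁻ y in s', ∑' k : ℕ, ENNReal.ofReal (1/β) * bg β ((y + k)/β) ∂volume := by
        rw [lintegral_tsum fun k => ((hgk k).const_mul (ENNReal.ofReal (1/β))).aemeasurable]
    _ = ∫⁻ y in s', bg β y ∂volume := by
        refine setLIntegral_congr_fun hs' (fun y hy => ?_)
        exact PF hβ y (hsub hy).1 (hsub hy).2
    _ = ν s' := (withDensity_apply _ hs').symm
    _ = ν s := by rw [hs'def]; exact (key s).symm

end RenyiAux

open RenyiAux in
/-- Rényi's theorem: for real `β > 1`, the `β`-transformation `T_β(x) = βx mod 1` on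
`[0,1)` preserves a probability measure absolutely continuous with respect to Lebesgue
measure. -/
theorem beta_transformation_acip (β : ℝ) (hβ : 1 < β) :
    ∃ μ : Measure ℝ, IsProbabilityMeasure μ ∧ μ ≪ volume ∧
      μ (Set.Ico (0 : ℝ) 1)ᶜ = 0 ∧
      MeasurePreserving (fun x : ℝ => Int.fract (β * x)) μ μ := by
  set ν := volume.withDensity (bg β) with hν
  set c := ν Set.univ with hc
  have hnull : ν (Set.Ico (0:ℝ) 1)ᶜ = 0 := nu_compl_zero
  have hc_ge : 1 ≤ c := by
    have h1 : ν (Set.Ico (0:ℝ) 1) ≤ c := measure_mono (Set.subset_univ _)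
    have h2 : (1:ℝ≥0∞) ≤ ν (Set.Ico (0:ℝ) 1) := by
      rw [hν, withDensity_apply _ measurableSet_Ico]
      calc (1:ℝ≥0∞) = ∫⁻ _ in Set.Ico (0:ℝ) 1, 1 ∂volume := by
            simp [Real.volume_Ico]
        _ ≤ ∫⁻ y in Set.Ico (0:ℝ) 1, bg β y ∂volume := by
            refine lintegral_mono_ae (ae_restrict_iff' measurableSet_Ico |>.mpr
              (Filter.Eventually.of_forall fun y hy => one_le_bg hy))
    exact le_trans h2 h1
  have hc_lt : c < ⊤ := by
    have hbound : ∀ x, bg β x ≤ Set.indicator (Set.Ico (0:ℝ) 1)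
        (fun _ => (1 - ENNReal.ofReal (1/β))⁻¹) x := by
      intro x
      by_cases hx : x ∈ Set.Ico (0:ℝ) 1
      · rw [Set.indicator_of_mem hx]; exact bg_le x
      · rw [Set.indicator_of_notMem hx, bg_zero hx]
    have h1 : c ≤ (1 - ENNReal.ofReal (1/β))⁻¹ := by
      rw [hc, hν, withDensity_apply _ MeasurableSet.univ, Measure.restrict_univ]
      calc ∫⁻ x, bg β x ∂volume
          ≤ ∫⁻ x, Set.indicator (Set.Ico (0:ℝ) 1)
              (fun _ => (1 - ENNReal.ofReal (1/β))⁻¹) x ∂volume := lintegral_mono hbound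
        _ = (1 - ENNReal.ofReal (1/β))⁻¹ * volume (Set.Ico (0:ℝ) 1) :=
            lintegral_indicator_const measurableSet_Ico _
        _ = (1 - ENNReal.ofReal (1/β))⁻¹ := by simp [Real.volume_Ico]
    refine lt_of_le_of_lt h1 ?_
    rw [ENNReal.inv_lt_top]
    exact tsub_pos_of_lt (r_lt_one hβ)
  have hc0 : c ≠ 0 := by
    intro h
    rw [h] at hc_ge
    exact (not_le.mpr zero_lt_one) hc_ge
  have hcT : c ≠ ⊤ := hc_lt.ne
  have hTmeas : Measurable (fun x : ℝ => Int.fract (β * x)) :=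
    (measurable_const_mul β).fract
  refine ⟨c⁻¹ • ν, ⟨?_⟩, ?_, ?_, hTmeas, ?_⟩
  · rw [Measure.smul_apply, smul_eq_mul, ← hc, ENNReal.inv_mul_cancel hc0 hcT]
  · refine Measure.AbsolutelyContinuous.mk fun t ht hvt => ?_
    have : ν t = 0 := withDensity_absolutelyContinuous volume _ hvt
    rw [Measure.smul_apply, smul_eq_mul, this, mul_zero]
  · rw [Measure.smul_apply, smul_eq_mul, hnull, mul_zero]
  · rw [Measure.map_smul]
    congr 1
    refine Measure.ext fun t ht => ?_
    rw [Measure.map_apply hTmeas ht]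
    exact nu_preimage hβ ht
end
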